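/- arXiv:math/0410276 — 8 statements merged into one kernel-verified Lean document; each statement's English description precedes it below -/
import Mathlib

section
/- Let ρ be a nonzero finite Borel measure on (0,∞) and let F = R_ρ be its Laplace transform. Let g be a probability density on ℝ with ∫_ℝ e^{sy} g(y) dy < ∞ for every s ∈ ℝ, and assume that (F * g)(x) < ∞ for every x ∈ ℝ. Then the normalized convolution 𝒩(F * g) is steeper than F. -/
open MeasureTheory Filter Set
open scoped ENNReal

/-- Laplace transform of a finite Borel measure on `[0,∞)` (value `+∞` allowed). -/
noncomputable def laplaceT (ρ : Measure ℝ) (x : ℝ) : ℝ≥0∞ :=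
  ∫⁻ u, ENNReal.ofReal (Real.exp (-(x * u))) ∂ρ

/-- Convolution `(F * g)(x) = ∫ F(x-y) g(y) dy` of an `[0,∞]`-valued function with a density. -/
noncomputable def convT (F : ℝ → ℝ≥0∞) (g : ℝ → ℝ) (x : ℝ) : ℝ≥0∞ :=
  ∫⁻ y, F (x - y) * ENNReal.ofReal (g y)

/-- Generalized inverse `H⁻¹(a) = inf {x : H x ≤ a}` of a nonincreasing function, with
values in `[-∞,∞]` (`+∞` for the empty set, `-∞` for sets unbounded below). -/
noncomputable def einvT (H : ℝ → ℝ≥0∞) (a : ℝ≥0∞) : EReal :=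
  sInf (Real.toEReal '' {x : ℝ | H x ≤ a})

/-- `G` is steeper than `F`: for all `0 ≤ a ≤ b ≤ ∞`,
`0 ≤ G⁻¹(a) - G⁻¹(b) ≤ F⁻¹(a) - F⁻¹(b)`.  The second inequality is stated in the
cross-added form `G⁻¹(a) + F⁻¹(b) ≤ F⁻¹(a) + G⁻¹(b)` to avoid `∞ - ∞`. -/
def SteeperT (F G : ℝ → ℝ≥0∞) : Prop :=
  ∀ a b : ℝ≥0∞, a ≤ b →
    einvT G b ≤ einvT G a ∧ einvT G a + einvT F b ≤ einvT F a + einvT G b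

/-- The normalizing shift `𝒩F(x) = F(x + z_F)` with `z_F = sup {z : F z ≥ 1}`. -/
noncomputable def normShiftT (F : ℝ → ℝ≥0∞) (x : ℝ) : ℝ≥0∞ :=
  F (x + sSup {z : ℝ | 1 ≤ F z})

/-! ### Auxiliary definitions -/

/-- The moment generating function of the density `g`, as an `ℝ≥0∞`-valued integral. -/
noncomputable def Mgf (g : ℝ → ℝ) (u : ℝ) : ℝ≥0∞ :=
  ∫⁻ y, ENNReal.ofReal (Real.exp (u * y) * g y)

/-- The exponential kernel `e^{-xu}` as an `ℝ≥0∞`-valued function. -/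
noncomputable def ee (x u : ℝ) : ℝ≥0∞ := ENNReal.ofReal (Real.exp (-(x * u)))

/-- The weight function `w(u) = e^{-cu} M(u)`. -/
noncomputable def wt (g : ℝ → ℝ) (c u : ℝ) : ℝ≥0∞ := ee c u * Mgf g u

lemma ee_pos (x u : ℝ) : 0 < ee x u := ENNReal.ofReal_pos.2 (Real.exp_pos _)

lemma ee_ne_top (x u : ℝ) : ee x u ≠ ⊤ := ENNReal.ofReal_ne_top

lemma ee_add (x z u : ℝ) : ee (x + z) u = ee x u * ee z u := by
  rw [ee, ee, ee, ← ENNReal.ofReal_mul (Real.exp_pos _).le, ← Real.exp_add]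
  ring_nf

lemma measurable_ee (x : ℝ) : Measurable (ee x) := by
  apply ENNReal.measurable_ofReal.comp
  exact (Real.continuous_exp.comp (continuous_const.mul continuous_id).neg).measurable

lemma ee_mono {z u v : ℝ} (hz : 0 ≤ z) (huv : u ≤ v) : ee z v ≤ ee z u := by
  apply ENNReal.ofReal_le_ofReal
  apply Real.exp_le_exp.2
  nlinarith

lemma ee_mono' {x u v : ℝ} (hx : x ≤ 0) (huv : u ≤ v) : ee x u ≤ ee x v := by
  apply ENNReal.ofReal_le_ofReal
  apply Real.exp_le_exp.2
  nlinarith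

lemma measurable_Mgf {g : ℝ → ℝ} (hg : Measurable g) : Measurable (Mgf g) := by
  have : Measurable (Function.uncurry fun u y => ENNReal.ofReal (Real.exp (u * y) * g y)) := by
    apply ENNReal.measurable_ofReal.comp
    exact ((Real.continuous_exp.comp continuous_mul).measurable).mul (hg.comp measurable_snd)
  exact this.lintegral_prod_right

lemma Mgf_pos {g : ℝ → ℝ} (hg : Measurable g) (hg_nonneg : ∀ y, 0 ≤ g y)
    (hg_prob : ∫ y, g y = 1) (u : ℝ) : 0 < Mgf g u := by
  rw [Mgf, pos_iff_ne_zero]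
  intro h0
  have hm : Measurable fun y => ENNReal.ofReal (Real.exp (u * y) * g y) := by
    apply ENNReal.measurable_ofReal.comp
    exact ((Real.continuous_exp.comp (continuous_const.mul continuous_id)).measurable).mul hg
  rw [lintegral_eq_zero_iff hm] at h0
  have : g =ᵐ[volume] 0 := by
    filter_upwards [h0] with y hy
    simp only [Pi.zero_apply, ENNReal.ofReal_eq_zero] at hy ⊢
    nlinarith [Real.exp_pos (u * y), hg_nonneg y]
  rw [integral_congr_ae this] at hg_prob
  simp at hg_prob

lemma integrable_g {g : ℝ → ℝ} (hg : Measurable g) (hg_nonneg : ∀ y, 0 ≤ g y)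
    (hg_exp : ∀ s : ℝ, (∫⁻ y, ENNReal.ofReal (Real.exp (s * y) * g y)) < ⊤) :
    Integrable g := by
  refine ⟨hg.aestronglyMeasurable, ?_⟩
  rw [hasFiniteIntegral_iff_ofReal (Eventually.of_forall hg_nonneg)]
  have := hg_exp 0
  simpa using this

lemma Mgf_zero' {g : ℝ → ℝ} : Mgf g 0 = ∫⁻ y, ENNReal.ofReal (g y) := by
  rw [Mgf]; congr 1; funext y; simp

lemma Mgf_zero {g : ℝ → ℝ} (hg : Measurable g) (hg_nonneg : ∀ y, 0 ≤ g y)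
    (hg_prob : ∫ y, g y = 1)
    (hg_exp : ∀ s : ℝ, (∫⁻ y, ENNReal.ofReal (Real.exp (s * y) * g y)) < ⊤) :
    Mgf g 0 = 1 := by
  rw [Mgf_zero', ← ofReal_integral_eq_lintegral_ofReal (integrable_g hg hg_nonneg hg_exp)
    (Eventually.of_forall hg_nonneg), hg_prob]
  simp

/-! ### Log-convexity of the weight (via Hölder) -/

lemma Mgf_holder {g : ℝ → ℝ} (hg : Measurable g) (hg_nonneg : ∀ y, 0 ≤ g y)
    (hM0 : Mgf g 0 = 1) {t : ℝ} (ht0 : 0 < t) (ht1 : t < 1) (v : ℝ) :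
    Mgf g (t * v) ≤ (Mgf g v) ^ t := by
  have ht1' : 0 < 1 - t := by linarith
  have hpq : (t⁻¹).HolderConjugate (1 - t)⁻¹ :=
    Real.HolderConjugate.inv_inv ht0 ht1' (by ring)
  set f : ℝ → ℝ≥0∞ := fun y => (ENNReal.ofReal (Real.exp (v * y) * g y)) ^ t with hf
  set h : ℝ → ℝ≥0∞ := fun y => (ENNReal.ofReal (g y)) ^ (1 - t) with hh
  have hfm : AEMeasurable f := by
    apply Measurable.aemeasurable
    apply Measurable.pow_const
    exact ENNReal.measurable_ofReal.comp
      (((Real.continuous_exp.comp (continuous_const.mul continuous_id)).measurable).mul hg)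
  have hhm : AEMeasurable h :=
    ((ENNReal.measurable_ofReal.comp hg).pow_const _).aemeasurable
  have key := ENNReal.lintegral_mul_le_Lp_mul_Lq volume hpq hfm hhm
  have hfh : ∀ y, (f * h) y = ENNReal.ofReal (Real.exp ((t * v) * y) * g y) := by
    intro y
    simp only [Pi.mul_apply, hf, hh]
    have hnn : 0 ≤ Real.exp (v * y) * g y := mul_nonneg (Real.exp_pos _).le (hg_nonneg y)
    rw [ENNReal.ofReal_rpow_of_nonneg hnn ht0.le,
      ENNReal.ofReal_rpow_of_nonneg (hg_nonneg y) ht1'.le,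
      ← ENNReal.ofReal_mul (Real.rpow_nonneg hnn _)]
    congr 1
    rw [Real.mul_rpow (Real.exp_pos _).le (hg_nonneg y)]
    rcases eq_or_lt_of_le (hg_nonneg y) with h0 | h0
    · rw [← h0, Real.zero_rpow ht0.ne', Real.zero_rpow ht1'.ne']
      ring
    · rw [← Real.exp_mul]
      rw [mul_assoc, ← Real.rpow_add h0, add_sub_cancel, Real.rpow_one]
      ring_nf
  have hfp : ∫⁻ y, f y ^ t⁻¹ = Mgf g v := by
    rw [Mgf]
    congr 1; funext y
    simp only [hf]
    rw [← ENNReal.rpow_mul, mul_inv_cancel₀ ht0.ne', ENNReal.rpow_one]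
  have hhq : ∫⁻ y, h y ^ (1 - t)⁻¹ = 1 := by
    have : ∀ y, h y ^ (1 - t)⁻¹ = ENNReal.ofReal (Real.exp (0 * y) * g y) := by
      intro y
      simp only [hh]
      rw [← ENNReal.rpow_mul, mul_inv_cancel₀ ht1'.ne', ENNReal.rpow_one]
      simp
    simp_rw [this]
    exact hM0
  rw [hfp, hhq, one_div, inv_inv, ENNReal.one_rpow, mul_one] at key
  calc Mgf g (t * v) = ∫⁻ y, (f * h) y := by rw [Mgf]; congr 1; funext y; rw [hfh]
    _ ≤ _ := key

lemma wt_interval {g : ℝ → ℝ} (hg : Measurable g) (hg_nonneg : ∀ y, 0 ≤ g y)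
    (hM0 : Mgf g 0 = 1) (c : ℝ) {u v : ℝ} (hu : 0 < u) (huv : u ≤ v)
    (hv : wt g c v ≤ 1) : wt g c u ≤ 1 := by
  rcases eq_or_lt_of_le huv with rfl | huv
  · exact hv
  have hv0 : 0 < v := hu.trans huv
  set t := u / v with htdef
  have ht0 : 0 < t := div_pos hu hv0
  have ht1 : t < 1 := (div_lt_one hv0).2 huv
  have hu2 : u = t * v := by rw [htdef]; field_simp
  have h1 : ee c u = (ee c v) ^ t := by
    rw [ee, ee, ENNReal.ofReal_rpow_of_pos (Real.exp_pos _), ← Real.exp_mul]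
    congr 2
    rw [hu2]; ring
  have h2 : Mgf g u ≤ (Mgf g v) ^ t := by
    rw [hu2]; exact Mgf_holder hg hg_nonneg hM0 ht0 ht1 v
  calc wt g c u = ee c u * Mgf g u := rfl
    _ ≤ (ee c v) ^ t * (Mgf g v) ^ t := by
        rw [h1]; exact mul_le_mul_right h2 _
    _ = (wt g c v) ^ t := (ENNReal.mul_rpow_of_nonneg _ _ ht0.le).symm
    _ ≤ 1 ^ t := ENNReal.rpow_le_rpow hv ht0.le
    _ = 1 := ENNReal.one_rpow t

/-! ### The Fubini representation of the convolution -/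

lemma conv_rep (ρ : Measure ℝ) [IsFiniteMeasure ρ] {g : ℝ → ℝ} (hg : Measurable g)
    (x : ℝ) : convT (laplaceT ρ) g x = ∫⁻ u, ee x u * Mgf g u ∂ρ := by
  have hmeas : Measurable (Function.uncurry fun y u =>
      ENNReal.ofReal (Real.exp (-((x - y) * u))) * ENNReal.ofReal (g y)) := by
    refine Measurable.mul (f := fun p : ℝ × ℝ => ENNReal.ofReal (Real.exp (-((x - p.1) * p.2))))
      (g := fun p : ℝ × ℝ => ENNReal.ofReal (g p.1)) ?_ ?_
    · apply ENNReal.measurable_ofReal.comp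
      exact (Real.continuous_exp.comp
        (((continuous_const.sub continuous_fst).mul continuous_snd).neg)).measurable
    · exact ENNReal.measurable_ofReal.comp (hg.comp measurable_fst)
  calc convT (laplaceT ρ) g x
      = ∫⁻ y, ∫⁻ u, ENNReal.ofReal (Real.exp (-((x - y) * u))) * ENNReal.ofReal (g y) ∂ρ := by
        rw [convT]
        congr 1; funext y
        rw [laplaceT, ← lintegral_mul_const]
        exact (Real.continuous_exp.comp ((continuous_const.mul continuous_id).neg)).measurable.ennreal_ofReal
    _ = ∫⁻ u, ∫⁻ y, ENNReal.ofReal (Real.exp (-((x - y) * u))) * ENNReal.ofReal (g y) ∂(volume) ∂ρ := by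
        exact lintegral_lintegral_swap hmeas.aemeasurable
    _ = ∫⁻ u, ee x u * Mgf g u ∂ρ := by
        congr 1; funext u
        rw [Mgf, ← lintegral_const_mul]
        · congr 1; funext y
          have harg : -((x - y) * u) = -(x * u) + u * y := by ring
          rw [ee, harg, Real.exp_add, ENNReal.ofReal_mul (Real.exp_pos _).le, mul_assoc,
            ← ENNReal.ofReal_mul (Real.exp_pos _).le]
        · exact ENNReal.measurable_ofReal.comp
            ((Real.measurable_exp.comp (measurable_const.mul measurable_id)).mul hg)

/-! ### The single-crossing property -/

lemma key_rep (ρ : Measure ℝ) (hρsupp : ρ (Set.Iic 0) = 0)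
    {g : ℝ → ℝ} (hg : Measurable g) (hg_nonneg : ∀ y, 0 ≤ g y) (hM0 : Mgf g 0 = 1)
    (c x x' : ℝ) (hxx' : x ≤ x')
    (hfin : (∫⁻ u, ee x u * wt g c u ∂ρ) ≠ ⊤)
    (h : ∫⁻ u, ee x u * wt g c u ∂ρ ≤ ∫⁻ u, ee x u ∂ρ) :
    ∫⁻ u, ee x' u * wt g c u ∂ρ ≤ ∫⁻ u, ee x' u ∂ρ := by
  set w : ℝ → ℝ≥0∞ := wt g c with hw
  have hw_meas : Measurable w := (measurable_ee c).mul (measurable_Mgf hg)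
  have haepos : ∀ᵐ u ∂ρ, 0 < u := by
    rw [ae_iff]
    convert hρsupp using 2
    ext u; simp [not_lt]
  by_cases hbdd : BddAbove {u : ℝ | 0 < u ∧ w u ≤ 1}
  swap
  · have hw1 : ∀ u, 0 < u → w u ≤ 1 := by
      intro u hu
      obtain ⟨v, ⟨hv0, hv1⟩, huv⟩ := not_bddAbove_iff.1 hbdd u
      exact wt_interval hg hg_nonneg hM0 c hu huv.le hv1
    apply lintegral_mono_ae
    filter_upwards [haepos] with u hu
    calc ee x' u * w u ≤ ee x' u * 1 := mul_le_mul_right (hw1 u hu) _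
      _ = ee x' u := mul_one _
  · set A : Set ℝ := {u : ℝ | 0 < u ∧ w u ≤ 1} with hA
    set B : Set ℝ := {u : ℝ | 0 < u ∧ 1 < w u} with hB
    have hA_meas : MeasurableSet A := by
      have : A = Ioi 0 ∩ w ⁻¹' (Iic 1) := by ext u; simp [hA]
      rw [this]
      exact measurableSet_Ioi.inter (hw_meas measurableSet_Iic)
    have hB_meas : MeasurableSet B := by
      have : B = Ioi 0 ∩ w ⁻¹' (Ioi 1) := by ext u; simp [hB]
      rw [this]
      exact measurableSet_Ioi.inter (hw_meas measurableSet_Ioi)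
    have hABdisj : Disjoint A B := by
      rw [Set.disjoint_left]
      rintro u ⟨_, h1⟩ ⟨_, h2⟩
      exact absurd h1 (not_le.2 h2)
    have hae : ρ (A ∪ B)ᶜ = 0 := by
      have : ∀ᵐ u ∂ρ, u ∈ A ∪ B := by
        filter_upwards [haepos] with u hu
        by_cases h1 : w u ≤ 1
        · exact Or.inl ⟨hu, h1⟩
        · exact Or.inr ⟨hu, not_le.1 h1⟩
      exact ae_iff.1 this
    have hsplit : ∀ f : ℝ → ℝ≥0∞,
        ∫⁻ u, f u ∂ρ = (∫⁻ u in A, f u ∂ρ) + ∫⁻ u in B, f u ∂ρ := by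
      intro f
      rw [← lintegral_union hB_meas hABdisj, ← setLIntegral_univ (μ := ρ) f]
      exact setLIntegral_congr (MeasureTheory.ae_eq_univ.2 hae).symm
    set u₂ : ℝ := sSup (insert 0 A) with hu₂
    have hbdd' : BddAbove (insert 0 A) := hbdd.insert 0
    have hAle : ∀ u ∈ A, u ≤ u₂ := fun u hu => le_csSup hbdd' (mem_insert_of_mem _ hu)
    have hBge : ∀ u ∈ B, u₂ ≤ u := by
      intro u hu
      apply csSup_le (insert_nonempty _ _)
      rintro v (rfl | hvA)
      · exact hu.1.le
      · by_contra hlt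
        exact absurd (wt_interval hg hg_nonneg hM0 c hu.1 (le_of_not_ge hlt) hvA.2)
          (not_le.2 hu.2)
    set δ : ℝ := x' - x with hδdef
    have hδ : 0 ≤ δ := by simp [hδdef, hxx']
    have hx' : x' = x + δ := by ring
    set θ : ℝ≥0∞ := ee δ u₂ with hθ
    have hA_pt : ∀ u ∈ A, θ * (ee x u * (1 - w u)) ≤ ee x' u * (1 - w u) := by
      intro u hu
      rw [hx', ee_add]
      rw [mul_comm (ee x u) (ee δ u), mul_assoc]
      exact mul_le_mul_left (ee_mono hδ (hAle u hu)) _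
    have hB_pt : ∀ u ∈ B, ee x' u * (w u - 1) ≤ θ * (ee x u * (w u - 1)) := by
      intro u hu
      rw [hx', ee_add, mul_comm (ee x u) (ee δ u), mul_assoc]
      exact mul_le_mul_left (ee_mono hδ (hBge u hu)) _
    have onB : ∀ z : ℝ, ∫⁻ u in B, ee z u * w u ∂ρ
        = (∫⁻ u in B, ee z u ∂ρ) + ∫⁻ u in B, ee z u * (w u - 1) ∂ρ := by
      intro z
      rw [← lintegral_add_left (measurable_ee z)]
      apply setLIntegral_congr_fun hB_meas
      intro u hu
      dsimp only
      nth_rewrite 2 [← mul_one (ee z u)]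
      rw [← mul_add, add_tsub_cancel_of_le hu.2.le]
    have onA : ∀ z : ℝ, ∫⁻ u in A, ee z u ∂ρ
        = (∫⁻ u in A, ee z u * w u ∂ρ) + ∫⁻ u in A, ee z u * (1 - w u) ∂ρ := by
      intro z
      rw [← lintegral_add_left (f := fun u => ee z u * w u) ((measurable_ee z).mul hw_meas)]
      apply setLIntegral_congr_fun hA_meas
      intro u hu
      dsimp only
      rw [← mul_add, add_tsub_cancel_of_le hu.2, mul_one]
    have hwB : ∀ u ∈ B, ee x u ≤ ee x u * w u := by
      intro u hu
      nth_rewrite 1 [← mul_one (ee x u)]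
      exact mul_le_mul_right hu.2.le _
    have hK : (∫⁻ u in A, ee x u * w u ∂ρ) + (∫⁻ u in B, ee x u ∂ρ) ≠ ⊤ := by
      apply ENNReal.add_ne_top.2
      constructor
      · exact ((setLIntegral_le_lintegral _ _).trans_lt hfin.lt_top).ne
      · refine (lt_of_le_of_lt ?_ hfin.lt_top).ne
        calc ∫⁻ u in B, ee x u ∂ρ ≤ ∫⁻ u in B, ee x u * w u ∂ρ :=
              setLIntegral_mono_ae ((measurable_ee x).mul hw_meas).aemeasurable
                (Eventually.of_forall hwB)
          _ ≤ _ := setLIntegral_le_lintegral _ _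
    have hPN : (∫⁻ u in B, ee x u * (w u - 1) ∂ρ) ≤ ∫⁻ u in A, ee x u * (1 - w u) ∂ρ := by
      have h1 : ((∫⁻ u in A, ee x u * w u ∂ρ) + (∫⁻ u in B, ee x u ∂ρ))
          + (∫⁻ u in B, ee x u * (w u - 1) ∂ρ)
          ≤ ((∫⁻ u in A, ee x u * w u ∂ρ) + (∫⁻ u in B, ee x u ∂ρ))
          + ∫⁻ u in A, ee x u * (1 - w u) ∂ρ := by
        calc ((∫⁻ u in A, ee x u * w u ∂ρ) + (∫⁻ u in B, ee x u ∂ρ))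
              + (∫⁻ u in B, ee x u * (w u - 1) ∂ρ)
            = ∫⁻ u, ee x u * w u ∂ρ := by rw [hsplit fun u => ee x u * w u, onB x]; ring
          _ ≤ ∫⁻ u, ee x u ∂ρ := h
          _ = _ := by rw [hsplit (ee x), onA x]; ring
      exact (ENNReal.add_le_add_iff_left hK).1 h1
    have hPx' : (∫⁻ u in B, ee x' u * (w u - 1) ∂ρ) ≤ ∫⁻ u in A, ee x' u * (1 - w u) ∂ρ := by
      calc ∫⁻ u in B, ee x' u * (w u - 1) ∂ρ
          ≤ ∫⁻ u in B, θ * (ee x u * (w u - 1)) ∂ρ :=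
            setLIntegral_mono_ae (((measurable_ee x).mul (hw_meas.sub measurable_const)).const_mul θ).aemeasurable
              (Eventually.of_forall hB_pt)
        _ = θ * ∫⁻ u in B, ee x u * (w u - 1) ∂ρ :=
            lintegral_const_mul' _ _ (ee_ne_top δ u₂)
        _ ≤ θ * ∫⁻ u in A, ee x u * (1 - w u) ∂ρ := mul_le_mul_right hPN _
        _ = ∫⁻ u in A, θ * (ee x u * (1 - w u)) ∂ρ :=
            (lintegral_const_mul' _ _ (ee_ne_top δ u₂)).symm
        _ ≤ ∫⁻ u in A, ee x' u * (1 - w u) ∂ρ :=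
            setLIntegral_mono_ae ((measurable_ee x').mul ((measurable_const.sub hw_meas))).aemeasurable
              (Eventually.of_forall hA_pt)
    calc ∫⁻ u, ee x' u * w u ∂ρ
        = ((∫⁻ u in A, ee x' u * w u ∂ρ) + (∫⁻ u in B, ee x' u ∂ρ))
          + (∫⁻ u in B, ee x' u * (w u - 1) ∂ρ) := by
          rw [hsplit fun u => ee x' u * w u, onB x']; ring
      _ ≤ ((∫⁻ u in A, ee x' u * w u ∂ρ) + (∫⁻ u in B, ee x' u ∂ρ))
          + (∫⁻ u in A, ee x' u * (1 - w u) ∂ρ) := add_le_add_right hPx' _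
      _ = ∫⁻ u, ee x' u ∂ρ := by rw [hsplit (ee x'), onA x']; ring

/-! ### Positivity, finiteness and sublevel sets -/

section
variable (ρ : Measure ℝ) [IsFiniteMeasure ρ]

omit [IsFiniteMeasure ρ] in
lemma ae_pos (hρsupp : ρ (Set.Iic 0) = 0) : ∀ᵐ u ∂ρ, 0 < u := by
  rw [ae_iff]
  convert hρsupp using 2
  ext u; simp [not_lt]

omit [IsFiniteMeasure ρ] in
lemma F_pos (hρ0 : ρ ≠ 0) (x : ℝ) : 0 < ∫⁻ u, ee x u ∂ρ := by
  rw [lintegral_pos_iff_support (measurable_ee x)]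
  have : Function.support (ee x) = univ := by
    ext u; simp [Function.mem_support, (ee_pos x u).ne']
  rw [this]
  exact Measure.measure_univ_pos.2 hρ0

omit [IsFiniteMeasure ρ] in
lemma G_pos (hρ0 : ρ ≠ 0) {g : ℝ → ℝ} (hg : Measurable g) (hg_nonneg : ∀ y, 0 ≤ g y)
    (hg_prob : ∫ y, g y = 1) (x : ℝ) : 0 < ∫⁻ u, ee x u * Mgf g u ∂ρ := by
  rw [lintegral_pos_iff_support (f := fun u => ee x u * Mgf g u) ((measurable_ee x).mul (measurable_Mgf hg))]
  have : Function.support (fun u => ee x u * Mgf g u) = univ := by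
    ext u
    simp only [Function.mem_support, mem_univ, iff_true]
    exact (ENNReal.mul_pos (ee_pos x u).ne' (Mgf_pos hg hg_nonneg hg_prob u).ne').ne'
  rw [this]
  exact Measure.measure_univ_pos.2 hρ0

omit [IsFiniteMeasure ρ] in
lemma exists_tail {g : ℝ → ℝ} (hM0 : Mgf g 0 = 1) :
    ∃ y₀ : ℝ, (2 : ℝ≥0∞)⁻¹ ≤ ∫⁻ y in Set.Ici y₀, ENNReal.ofReal (g y) := by
  by_contra hcon
  push_neg at hcon
  set ν : Measure ℝ := volume.withDensity (fun y => ENNReal.ofReal (g y)) with hν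
  have hν_apply : ∀ y₀ : ℝ, ν (Set.Ici y₀) = ∫⁻ y in Set.Ici y₀, ENNReal.ofReal (g y) :=
    fun y₀ => withDensity_apply _ measurableSet_Ici
  have huniv : ν univ = 1 := by
    rw [hν, withDensity_apply _ MeasurableSet.univ, setLIntegral_univ, ← Mgf_zero', hM0]
  have hmono : Monotone (fun n : ℕ => Set.Ici (-(n : ℝ))) := by
    intro m n hmn
    exact Set.Ici_subset_Ici.2 (neg_le_neg (by exact_mod_cast hmn))
  have hsup : ⨆ n : ℕ, ν (Set.Ici (-(n : ℝ))) = ν univ := by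
    rw [← hmono.measure_iUnion]
    congr 1
    ext y
    simp only [mem_iUnion, mem_Ici, mem_univ, iff_true]
    obtain ⟨n, hn⟩ := exists_nat_ge (-y)
    exact ⟨n, by linarith⟩
  have : (1 : ℝ≥0∞) ≤ 2⁻¹ := by
    rw [← huniv, ← hsup]
    apply iSup_le
    intro n
    rw [hν_apply]
    exact (hcon _).le
  simp at this

omit [IsFiniteMeasure ρ] in
lemma Mgf_lower {g : ℝ → ℝ} (hg : Measurable g) (hg_nonneg : ∀ y, 0 ≤ g y)
    {y₀ : ℝ} (hy₀ : (2 : ℝ≥0∞)⁻¹ ≤ ∫⁻ y in Set.Ici y₀, ENNReal.ofReal (g y))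
    {u : ℝ} (hu : 0 ≤ u) : ee (-y₀) u ≤ 2 * Mgf g u := by
  have h1 : ee (-y₀) u * 2⁻¹ ≤ ee (-y₀) u * ∫⁻ y in Set.Ici y₀, ENNReal.ofReal (g y) :=
    mul_le_mul_right hy₀ _
  have h2 : ee (-y₀) u * ∫⁻ y in Set.Ici y₀, ENNReal.ofReal (g y) ≤ Mgf g u := by
    rw [← lintegral_const_mul' _ _ (ee_ne_top _ _)]
    refine le_trans (le_trans ?_ (setLIntegral_le_lintegral (Set.Ici y₀)
      (fun y => ENNReal.ofReal (Real.exp (u * y) * g y)))) (le_of_eq rfl)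
    apply setLIntegral_mono_ae (ENNReal.measurable_ofReal.comp
      ((Real.measurable_exp.comp (measurable_const.mul measurable_id)).mul hg)).aemeasurable
    apply Eventually.of_forall
    intro y hy
    show ENNReal.ofReal (Real.exp (-(-y₀ * u))) * ENNReal.ofReal (g y)
      ≤ ENNReal.ofReal (Real.exp (u * y) * g y)
    rw [← ENNReal.ofReal_mul (Real.exp_pos _).le]
    apply ENNReal.ofReal_le_ofReal
    apply mul_le_mul_of_nonneg_right _ (hg_nonneg y)
    apply Real.exp_le_exp.2
    nlinarith [mem_Ici.1 hy]
  calc ee (-y₀) u = 2 * (ee (-y₀) u * 2⁻¹) := by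
        rw [mul_comm (ee _ _) _, ← mul_assoc, ENNReal.mul_inv_cancel (by norm_num) (by norm_num), one_mul]
    _ ≤ 2 * Mgf g u := mul_le_mul_right (h1.trans h2) _

omit [IsFiniteMeasure ρ] in
lemma F_lt_top (hρsupp : ρ (Set.Iic 0) = 0)
    {g : ℝ → ℝ} (hg : Measurable g) (hg_nonneg : ∀ y, 0 ≤ g y)
    {y₀ : ℝ} (hy₀ : (2 : ℝ≥0∞)⁻¹ ≤ ∫⁻ y in Set.Ici y₀, ENNReal.ofReal (g y))
    (hGfin : ∀ x : ℝ, (∫⁻ u, ee x u * Mgf g u ∂ρ) < ⊤) (x : ℝ) :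
    (∫⁻ u, ee x u ∂ρ) < ⊤ := by
  have hle : ∫⁻ u, ee x u ∂ρ ≤ 2 * ∫⁻ u, ee (x + y₀) u * Mgf g u ∂ρ := by
    rw [← lintegral_const_mul' _ _ (by norm_num : (2:ℝ≥0∞) ≠ ⊤)]
    apply lintegral_mono_ae
    filter_upwards [ae_pos ρ hρsupp] with u hu
    have : ee x u = ee (x + y₀) u * ee (-y₀) u := by
      rw [← ee_add]; norm_num
    rw [this, mul_comm (2:ℝ≥0∞) _, mul_assoc]
    exact mul_le_mul_right ((Mgf_lower hg hg_nonneg hy₀ hu.le).trans_eq (mul_comm _ _)) _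
  exact hle.trans_lt (by
    rw [ENNReal.mul_lt_top_iff]
    left
    exact ⟨by norm_num, hGfin _⟩)

lemma sublevel_nonempty (hρsupp : ρ (Set.Iic 0) = 0) {W : ℝ → ℝ≥0∞} (hW : Measurable W)
    (hWfin : ∀ u, W u < ⊤) (hfin : (∫⁻ u, W u ∂ρ) ≠ ⊤) {r : ℝ≥0∞} (hr : 0 < r) :
    ∃ x : ℝ, (∫⁻ u, ee x u * W u ∂ρ) ≤ r := by
  have hlim : ∀ᵐ u ∂ρ, Tendsto (fun n : ℕ => ee n u * W u) atTop (nhds ((fun _ => (0:ℝ≥0∞)) u)) := by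
    filter_upwards [ae_pos ρ hρsupp] with u hu
    have h1 : Tendsto (fun n : ℕ => ee n u) atTop (nhds 0) := by
      have hb : Tendsto (fun n : ℕ => -((n : ℝ) * u)) atTop atBot := by
        apply Filter.tendsto_neg_atTop_atBot.comp
        exact tendsto_natCast_atTop_atTop.atTop_mul_const hu
      have he : Tendsto (fun n : ℕ => Real.exp (-((n : ℝ) * u))) atTop (nhds 0) :=
        Real.tendsto_exp_atBot.comp hb
      have := (ENNReal.continuous_ofReal.tendsto 0).comp he
      simpa [ee, Function.comp_def] using this
    have := ENNReal.Tendsto.mul_const h1 (Or.inr (hWfin u).ne)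
    simpa using this
  have hbound : ∀ n : ℕ, ∀ᵐ u ∂ρ, ee n u * W u ≤ W u := by
    intro n
    filter_upwards [ae_pos ρ hρsupp] with u hu
    calc ee n u * W u ≤ 1 * W u := by
          apply mul_le_mul_left
          rw [ee, ← ENNReal.ofReal_one]
          apply ENNReal.ofReal_le_ofReal
          rw [Real.exp_le_one_iff]
          exact neg_nonpos.2 (by positivity)
      _ = W u := one_mul _
  have htend : Tendsto (fun n : ℕ => ∫⁻ u, ee n u * W u ∂ρ) atTop (nhds 0) := by
    have := tendsto_lintegral_of_dominated_convergence W
      (fun n => (measurable_ee _).mul hW) hbound hfin hlim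
    simpa using this
  obtain ⟨n, hn⟩ := (htend.eventually_lt_const hr).exists
  exact ⟨n, hn.le⟩

omit [IsFiniteMeasure ρ] in
lemma sublevel_bddBelow {W : ℝ → ℝ≥0∞} (hW : Measurable W)
    {ε : ℝ} (hε : 0 < ε) (hQ : (∫⁻ u in Set.Ici ε, W u ∂ρ) ≠ 0) {r : ℝ≥0∞} (hr : r ≠ ⊤) :
    BddBelow {x : ℝ | (∫⁻ u, ee x u * W u ∂ρ) ≤ r} := by
  set Q := ∫⁻ u in Set.Ici ε, W u ∂ρ with hQdef
  have htend : Tendsto (fun x : ℝ => ee x ε * Q) atBot (nhds ⊤) := by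
    have hb : Tendsto (fun x : ℝ => -(x * ε)) atBot atTop := by
      apply Filter.tendsto_neg_atBot_atTop.comp
      exact Filter.tendsto_id.atBot_mul_const hε
    have he : Tendsto (fun x : ℝ => ENNReal.ofReal (Real.exp (-(x * ε)))) atBot (nhds ⊤) :=
      ENNReal.tendsto_ofReal_atTop.comp (Real.tendsto_exp_atTop.comp hb)
    have := ENNReal.Tendsto.mul_const (b := Q) he (Or.inl (by simp : (⊤:ℝ≥0∞) ≠ 0))
    rwa [ENNReal.top_mul hQ] at this
  have hev : ∀ᶠ x in atBot, r < ee x ε * Q ∧ x ≤ 0 := by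
    refine Filter.Eventually.and ?_ (eventually_le_atBot 0)
    exact htend.eventually_const_lt hr.lt_top
  obtain ⟨m, hm⟩ := eventually_atBot.1 hev
  refine ⟨m, ?_⟩
  intro y hy
  by_contra hym
  push_neg at hym
  obtain ⟨hry, hy0⟩ := hm y hym.le
  have hbound : ee y ε * Q ≤ ∫⁻ u, ee y u * W u ∂ρ := by
    calc ee y ε * Q = ∫⁻ u in Set.Ici ε, ee y ε * W u ∂ρ :=
          (lintegral_const_mul' _ _ (ee_ne_top _ _)).symm
      _ ≤ ∫⁻ u in Set.Ici ε, ee y u * W u ∂ρ := by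
          apply setLIntegral_mono_ae ((measurable_ee _).mul hW).aemeasurable
          apply Eventually.of_forall
          intro u hu
          exact mul_le_mul_left (ee_mono' hy0 (mem_Ici.1 hu)) _
      _ ≤ _ := setLIntegral_le_lintegral _ _
  exact absurd (le_trans hbound hy) (not_le.2 hry)

omit [IsFiniteMeasure ρ] in
lemma exists_eps (hρ0 : ρ ≠ 0) (hρsupp : ρ (Set.Iic 0) = 0) {W : ℝ → ℝ≥0∞}
    (hW : Measurable W) (hWpos : ∀ u, 0 < W u) :
    ∃ ε : ℝ, 0 < ε ∧ (∫⁻ u in Set.Ici ε, W u ∂ρ) ≠ 0 := by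
  by_contra hcon
  push_neg at hcon
  have hzero : ∀ n : ℕ, (∫⁻ u in Set.Ici (1 / ((n : ℝ) + 1)), W u ∂ρ) = 0 :=
    fun n => hcon _ (by positivity)
  have hIoi : (∫⁻ u in Set.Ioi (0:ℝ), W u ∂ρ) = 0 := by
    have hsub : Set.Ioi (0:ℝ) ⊆ ⋃ n : ℕ, Set.Ici (1 / ((n : ℝ) + 1)) := by
      intro u hu
      obtain ⟨n, hn⟩ := exists_nat_one_div_lt (mem_Ioi.1 hu)
      exact mem_iUnion.2 ⟨n, mem_Ici.2 hn.le⟩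
    refine le_antisymm ?_ zero_le
    calc (∫⁻ u in Set.Ioi (0:ℝ), W u ∂ρ) ≤ ∫⁻ u in ⋃ n : ℕ, Set.Ici (1 / ((n : ℝ) + 1)), W u ∂ρ :=
          lintegral_mono_set hsub
      _ ≤ ∑' n : ℕ, ∫⁻ u in Set.Ici (1 / ((n : ℝ) + 1)), W u ∂ρ := lintegral_iUnion_le _ _
      _ = ∑' _ : ℕ, (0:ℝ≥0∞) := tsum_congr hzero
      _ = 0 := tsum_zero
  have heq : (∫⁻ u in Set.Ioi (0:ℝ), W u ∂ρ) = ∫⁻ u, W u ∂ρ := by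
    rw [← setLIntegral_univ (μ := ρ) W]
    exact setLIntegral_congr (MeasureTheory.ae_eq_univ.2 (by rwa [compl_Ioi]))
  have hpos : 0 < ∫⁻ u, W u ∂ρ := by
    rw [lintegral_pos_iff_support hW]
    have : Function.support W = univ := by
      ext u; simp [Function.mem_support, (hWpos u).ne']
    rw [this]
    exact Measure.measure_univ_pos.2 hρ0
  rw [← heq, hIoi] at hpos
  exact lt_irrefl _ hpos
end

/-! ### Generalized inverses -/

lemma einvT_mono (H : ℝ → ℝ≥0∞) {a b : ℝ≥0∞} (hab : a ≤ b) : einvT H b ≤ einvT H a :=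
  sInf_le_sInf (image_mono fun _ hx => le_trans hx hab)

lemma einvT_top (H : ℝ → ℝ≥0∞) : einvT H ⊤ = ⊥ := by
  rw [einvT, sInf_eq_bot]
  intro b hb
  obtain ⟨x, hx1, hx2⟩ := EReal.lt_iff_exists_real_btwn.1 hb
  exact ⟨x, ⟨x, by simp, rfl⟩, hx2⟩

lemma einvT_ne_bot {H : ℝ → ℝ≥0∞} {r : ℝ≥0∞} (h : BddBelow {x : ℝ | H x ≤ r}) :
    einvT H r ≠ ⊥ := by
  obtain ⟨m, hm⟩ := h
  have : (m : EReal) ≤ einvT H r := by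
    apply le_sInf
    rintro _ ⟨x, hx, rfl⟩
    exact_mod_cast hm hx
  exact ne_bot_of_gt (lt_of_lt_of_le (by simp : (⊥ : EReal) < (m : EReal)) this)

lemma einvT_empty {H : ℝ → ℝ≥0∞} {r : ℝ≥0∞} (h : ∀ x, ¬ H x ≤ r) : einvT H r = ⊤ := by
  have : {x : ℝ | H x ≤ r} = ∅ := eq_empty_iff_forall_notMem.2 h
  rw [einvT, this, image_empty, sInf_empty]

lemma einvT_coe {H : ℝ → ℝ≥0∞} {r : ℝ≥0∞} (hne : {x : ℝ | H x ≤ r}.Nonempty)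
    (hbdd : BddBelow {x : ℝ | H x ≤ r}) :
    einvT H r = ((sInf {x : ℝ | H x ≤ r} : ℝ) : EReal) :=
  (Monotone.map_csInf_of_continuousAt (continuous_coe_real_ereal.continuousAt)
    EReal.coe_strictMono.monotone hne hbdd).symm

lemma cross {F G : ℝ → ℝ≥0∞} {a b : ℝ≥0∞}
    (key : ∀ c x x', x ≤ x' → G (x + c) ≤ F x → G (x' + c) ≤ F x') (hab : a ≤ b)
    (hFa_ne : {x : ℝ | F x ≤ a}.Nonempty) (hFb_bdd : BddBelow {x : ℝ | F x ≤ b})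
    (hGb_ne : {x : ℝ | G x ≤ b}.Nonempty) (hGa_bdd : BddBelow {x : ℝ | G x ≤ a}) :
    sInf {x : ℝ | G x ≤ a} + sInf {x : ℝ | F x ≤ b}
      ≤ sInf {x : ℝ | F x ≤ a} + sInf {x : ℝ | G x ≤ b} := by
  apply le_of_forall_pos_le_add
  intro ε hε
  have hε3 : 0 < ε / 3 := by linarith
  obtain ⟨x', hx'a, hx'lt⟩ := exists_lt_of_csInf_lt hFa_ne
    (lt_add_of_pos_right (sInf {x : ℝ | F x ≤ a}) hε3)
  obtain ⟨xg, hxgb, hxglt⟩ := exists_lt_of_csInf_lt hGb_ne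
    (lt_add_of_pos_right (sInf {x : ℝ | G x ≤ b}) hε3)
  set x : ℝ := sInf {x : ℝ | F x ≤ b} - ε / 3 with hxdef
  have hxnot : ¬ F x ≤ b := by
    intro hmem
    have := csInf_le hFb_bdd hmem
    rw [hxdef] at this
    linarith
  have hbFx : b < F x := not_le.1 hxnot
  have hxx' : x ≤ x' := by
    have hx'b : x' ∈ {x : ℝ | F x ≤ b} := le_trans hx'a hab
    have := csInf_le hFb_bdd hx'b
    rw [hxdef]
    linarith
  have hstart : G (x + (xg - x)) ≤ F x := by
    have : x + (xg - x) = xg := by ring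
    rw [this]
    exact le_trans hxgb hbFx.le
  have hend : G (x' + (xg - x)) ≤ a := le_trans (key _ x x' hxx' hstart) hx'a
  have hfinal : sInf {x : ℝ | G x ≤ a} ≤ x' + (xg - x) := csInf_le hGa_bdd hend
  rw [hxdef] at hfinal
  linarith

/-! ### Main theorem -/

/-- For a nonzero finite measure `ρ` on `(0,∞)` with Laplace transform `F = R_ρ`, and a
probability density `g` with all exponential moments such that `(F * g)(x) < ∞` everywhere,
the normalized convolution `𝒩(F * g)` is steeper than `F`. -/
theorem normShift_conv_steeper
    (ρ : Measure ℝ) [IsFiniteMeasure ρ] (hρ0 : ρ ≠ 0) (hρsupp : ρ (Set.Iic 0) = 0)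
    (g : ℝ → ℝ) (hg_meas : Measurable g) (hg_nonneg : ∀ y, 0 ≤ g y)
    (hg_prob : ∫ y, g y = 1)
    (hg_exp : ∀ s : ℝ, (∫⁻ y, ENNReal.ofReal (Real.exp (s * y) * g y)) < ⊤)
    (hconv : ∀ x : ℝ, convT (laplaceT ρ) g x < ⊤) :
    SteeperT (laplaceT ρ) (normShiftT (convT (laplaceT ρ) g)) := by
  have hM0 : Mgf g 0 = 1 := Mgf_zero hg_meas hg_nonneg hg_prob hg_exp
  have hrep : ∀ x : ℝ, convT (laplaceT ρ) g x = ∫⁻ u, ee x u * Mgf g u ∂ρ :=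
    conv_rep ρ hg_meas
  have hFrep : ∀ x : ℝ, laplaceT ρ x = ∫⁻ u, ee x u ∂ρ := fun _ => rfl
  have hMgf_meas : Measurable (Mgf g) := measurable_Mgf hg_meas
  have hMgf_fin : ∀ u, Mgf g u < ⊤ := fun u => hg_exp u
  have hMgf_pos : ∀ u, 0 < Mgf g u := Mgf_pos hg_meas hg_nonneg hg_prob
  obtain ⟨y₀, hy₀⟩ := exists_tail hM0
  have hGfin : ∀ x : ℝ, (∫⁻ u, ee x u * Mgf g u ∂ρ) < ⊤ := fun x => (hrep x) ▸ hconv x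
  have hFfin : ∀ x : ℝ, (∫⁻ u, ee x u ∂ρ) < ⊤ :=
    F_lt_top ρ hρsupp hg_meas hg_nonneg hy₀ hGfin
  set G0 : ℝ → ℝ≥0∞ := convT (laplaceT ρ) g with hG0def
  set z : ℝ := sSup {z : ℝ | 1 ≤ G0 z} with hzdef
  have hGdef : ∀ x, normShiftT G0 x = G0 (x + z) := fun _ => rfl
  -- single-crossing for G0 relative to F
  have key0 : ∀ c x x', x ≤ x' → G0 (x + c) ≤ laplaceT ρ x → G0 (x' + c) ≤ laplaceT ρ x' := by
    intro c x x' hxx h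
    have conv1 : ∀ t : ℝ, G0 (t + c) = ∫⁻ u, ee t u * wt g c u ∂ρ := by
      intro t
      rw [hrep (t + c)]
      congr 1; funext u
      rw [ee_add, wt, mul_assoc]
    have hfin' : (∫⁻ u, ee x u * wt g c u ∂ρ) ≠ ⊤ := by
      rw [← conv1 x]; exact (hconv (x + c)).ne
    rw [conv1, hFrep] at h ⊢
    exact key_rep ρ hρsupp hg_meas hg_nonneg hM0 c x x' hxx hfin' h
  have keyG : ∀ c x x', x ≤ x' → normShiftT G0 (x + c) ≤ laplaceT ρ x →
      normShiftT G0 (x' + c) ≤ laplaceT ρ x' := by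
    intro c x x' hxx h
    rw [hGdef] at h ⊢
    have e1 : x + c + z = x + (c + z) := by ring
    have e2 : x' + c + z = x' + (c + z) := by ring
    rw [e1] at h; rw [e2]
    exact key0 (c + z) x x' hxx h
  -- positivity
  have hFpos : ∀ x, 0 < laplaceT ρ x := by
    intro x; rw [hFrep]; exact F_pos ρ hρ0 x
  have hGpos : ∀ x, 0 < normShiftT G0 x := by
    intro x; rw [hGdef, hrep]; exact G_pos ρ hρ0 hg_meas hg_nonneg hg_prob _
  -- sublevel sets for F
  have hSF_ne : ∀ {r : ℝ≥0∞}, 0 < r → {x : ℝ | laplaceT ρ x ≤ r}.Nonempty := by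
    intro r hr
    obtain ⟨x, hx⟩ := sublevel_nonempty ρ hρsupp (measurable_const (a := (1:ℝ≥0∞)))
      (fun _ => by norm_num) (by rw [lintegral_one]; exact measure_ne_top ρ univ) hr
    exact ⟨x, by rw [mem_setOf_eq, hFrep]; simpa using hx⟩
  have hSF_bdd : ∀ {r : ℝ≥0∞}, r ≠ ⊤ → BddBelow {x : ℝ | laplaceT ρ x ≤ r} := by
    intro r hr
    obtain ⟨ε, hε, hQ⟩ := exists_eps ρ hρ0 hρsupp (measurable_const (a := (1:ℝ≥0∞)))
      (fun _ => by norm_num)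
    have := sublevel_bddBelow ρ (measurable_const (a := (1:ℝ≥0∞))) hε hQ hr
    have hset : {x : ℝ | (∫⁻ u, ee x u * 1 ∂ρ) ≤ r} = {x : ℝ | laplaceT ρ x ≤ r} := by
      ext x; rw [mem_setOf_eq, mem_setOf_eq, hFrep]; simp
    rwa [hset] at this
  -- sublevel sets for G0
  have hMint : (∫⁻ u, Mgf g u ∂ρ) ≠ ⊤ := by
    have h0 : (∫⁻ u, Mgf g u ∂ρ) = ∫⁻ u, ee 0 u * Mgf g u ∂ρ := by
      congr 1; funext u; simp [ee]
    rw [h0]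
    exact (hGfin 0).ne
  have hSG0_ne : ∀ {r : ℝ≥0∞}, 0 < r → ∃ x : ℝ, G0 x ≤ r := by
    intro r hr
    obtain ⟨x, hx⟩ := sublevel_nonempty ρ hρsupp hMgf_meas hMgf_fin hMint hr
    exact ⟨x, by rw [hrep]; exact hx⟩
  have hSG0_bdd : ∀ {r : ℝ≥0∞}, r ≠ ⊤ → BddBelow {x : ℝ | G0 x ≤ r} := by
    intro r hr
    obtain ⟨ε, hε, hQ⟩ := exists_eps ρ hρ0 hρsupp hMgf_meas hMgf_pos
    have := sublevel_bddBelow ρ hMgf_meas hε hQ hr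
    have hset : {x : ℝ | (∫⁻ u, ee x u * Mgf g u ∂ρ) ≤ r} = {x : ℝ | G0 x ≤ r} := by
      ext x; rw [mem_setOf_eq, mem_setOf_eq, hrep]
    rwa [hset] at this
  -- sublevel sets for the shifted G
  have hSG_ne : ∀ {r : ℝ≥0∞}, 0 < r → {x : ℝ | normShiftT G0 x ≤ r}.Nonempty := by
    intro r hr
    obtain ⟨x, hx⟩ := hSG0_ne hr
    exact ⟨x - z, by rw [mem_setOf_eq, hGdef, sub_add_cancel]; exact hx⟩
  have hSG_bdd : ∀ {r : ℝ≥0∞}, r ≠ ⊤ → BddBelow {x : ℝ | normShiftT G0 x ≤ r} := by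
    intro r hr
    obtain ⟨m, hm⟩ := hSG0_bdd hr
    refine ⟨m - z, ?_⟩
    intro y hy
    have : y + z ∈ {x : ℝ | G0 x ≤ r} := by
      rw [mem_setOf_eq]; rw [mem_setOf_eq, hGdef] at hy; exact hy
    have := hm this
    linarith
  -- conclusion
  intro a b hab
  refine ⟨einvT_mono _ hab, ?_⟩
  by_cases hb : b = ⊤
  · subst hb
    rw [einvT_top, einvT_top, EReal.add_bot, EReal.add_bot]
  by_cases ha0 : a = 0
  · subst ha0
    have hGtop : einvT (normShiftT G0) 0 = ⊤ := einvT_empty (fun x => not_le.2 (hGpos x))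
    have hFtop : einvT (laplaceT ρ) 0 = ⊤ := einvT_empty (fun x => not_le.2 (hFpos x))
    rw [hGtop, hFtop, EReal.top_add_of_ne_bot (einvT_ne_bot (hSF_bdd hb)),
      EReal.top_add_of_ne_bot (einvT_ne_bot (hSG_bdd hb))]
  · have ha : 0 < a := pos_iff_ne_zero.2 ha0
    have ha' : a ≠ ⊤ := fun h => hb (top_le_iff.1 (h ▸ hab))
    have hbpos : 0 < b := lt_of_lt_of_le ha hab
    rw [einvT_coe (hSG_ne ha) (hSG_bdd ha'), einvT_coe (hSF_ne hbpos) (hSF_bdd hb),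
      einvT_coe (hSF_ne ha) (hSF_bdd ha'), einvT_coe (hSG_ne hbpos) (hSG_bdd hb),
      ← EReal.coe_add, ← EReal.coe_add, EReal.coe_le_coe_iff]
    exact cross keyG hab (hSF_ne ha) (hSF_bdd hb) (hSG_ne hbpos) (hSG_bdd ha')
end

section
/- Let ρ be a Borel probability measure on (0,∞) with Laplace transform F = R_ρ (so F(0) = 1), and let g be a probability density on ℝ with ∫_ℝ e^{sy} g(y) dy < ∞ for every s ∈ ℝ such that (F * g)(x) < ∞ for every x ∈ ℝ. Let z = sup{z ∈ ℝ : (F * g)(z) ≥ 1} be the normalizing shift of F * g, and define S(u) = log ∫_ℝ e^{(y − z)u} g(y) dy for u ≥ 0, so that 𝒩(F * g)(x) = ∫_{[0,∞)} e^{−xu} e^{S(u)} dρ(u). Then for every λ ≥ 0, ∫_{[0,λ]} e^{S(u)} dρ(u) ≤ ρ([0,λ]). -/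
open MeasureTheory Filter Set
open scoped ENNReal

lemma exp_convex_aux {p a : ℝ} (hp0 : 0 ≤ p) (hp1 : p ≤ 1) :
    Real.exp (p * a) ≤ p * Real.exp a + (1 - p) := by
  have h := convexOn_exp.2 (Set.mem_univ a) (Set.mem_univ (0:ℝ)) hp0
    (sub_nonneg.2 hp1) (by ring)
  simpa [smul_eq_mul, Real.exp_zero] using h

/-- Let `ρ` be a probability measure on `(0,∞)` with Laplace transform `F = R_ρ`, `g` a
probability density with all exponential moments such that `(F * g)(x) < ∞` everywhere.
With `z` the normalizing shift of `F * g` and `S(u) = log ∫ e^{(y-z)u} g(y) dy`, one has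
`∫_{[0,λ]} e^{S(u)} dρ(u) ≤ ρ([0,λ])` for every `λ ≥ 0`. -/
theorem laplace_weight_concentration
    (ρ : Measure ℝ) [IsProbabilityMeasure ρ] (hρsupp : ρ (Set.Iic 0) = 0)
    (g : ℝ → ℝ) (hg_meas : Measurable g) (hg_nonneg : ∀ y, 0 ≤ g y)
    (hg_prob : ∫ y, g y = 1)
    (hg_exp : ∀ s : ℝ, (∫⁻ y, ENNReal.ofReal (Real.exp (s * y) * g y)) < ⊤)
    (hconv : ∀ x : ℝ, convT (laplaceT ρ) g x < ⊤)
    (z : ℝ) (hz : z = sSup {t : ℝ | 1 ≤ convT (laplaceT ρ) g t})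
    (S : ℝ → ℝ) (hS : ∀ u : ℝ, S u = Real.log (∫ y, Real.exp ((y - z) * u) * g y)) :
    ∀ l : ℝ, 0 ≤ l →
      (∫⁻ u in Set.Icc (0:ℝ) l, ENNReal.ofReal (Real.exp (S u)) ∂ρ) ≤ ρ (Set.Icc (0:ℝ) l) := by
  -- measurability of shifted exponential integrands
  have hmeasE : ∀ c t : ℝ, Measurable fun y => Real.exp ((y - c) * t) * g y := fun c t =>
    (((measurable_id.sub_const c).mul_const t).exp).mul hg_meas
  -- finiteness of shifted exponential lintegrals
  have hlint : ∀ c t : ℝ, (∫⁻ y, ENNReal.ofReal (Real.exp ((y - c) * t) * g y)) < ⊤ := by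
    intro c t
    have h1 : ∀ y : ℝ, Real.exp ((y - c) * t) * g y
        = Real.exp (-(c * t)) * (Real.exp (t * y) * g y) := by
      intro y; rw [← mul_assoc, ← Real.exp_add]; congr 2; ring
    simp only [h1]
    have h2 : ∀ y : ℝ, ENNReal.ofReal (Real.exp (-(c * t)) * (Real.exp (t * y) * g y))
        = ENNReal.ofReal (Real.exp (-(c * t))) * ENNReal.ofReal (Real.exp (t * y) * g y) :=
      fun y => ENNReal.ofReal_mul (Real.exp_nonneg _)
    simp only [h2]
    rw [lintegral_const_mul' _ _ ENNReal.ofReal_ne_top]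
    exact ENNReal.mul_lt_top ENNReal.ofReal_lt_top (hg_exp t)
  -- integrability
  have hint : ∀ c t : ℝ, Integrable (fun y => Real.exp ((y - c) * t) * g y) := by
    intro c t
    refine ⟨(hmeasE c t).aestronglyMeasurable, ?_⟩
    rw [hasFiniteIntegral_iff_ofReal
      (ae_of_all _ fun y => mul_nonneg (Real.exp_nonneg _) (hg_nonneg y))]
    exact hlint c t
  have hgint : Integrable g := by
    have := hint z 0
    simpa using this
  -- the moment function M
  set M : ℝ → ℝ := fun u => ∫ y, Real.exp ((y - z) * u) * g y with hMdef
  have hMnonneg : ∀ u, 0 ≤ M u := fun u =>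
    integral_nonneg fun y => mul_nonneg (Real.exp_nonneg _) (hg_nonneg y)
  have hMpos : ∀ u, 0 < M u := by
    intro u
    rcases (hMnonneg u).lt_or_eq with h | h
    · exact h
    · exfalso
      have h0 : (fun y => Real.exp ((y - z) * u) * g y) =ᵐ[volume] 0 := by
        rw [← integral_eq_zero_iff_of_nonneg
          (fun y => mul_nonneg (Real.exp_nonneg _) (hg_nonneg y)) (hint z u)]
        exact h.symm
      have hg0 : g =ᵐ[volume] 0 := by
        refine h0.mono fun y hy => ?_
        have : Real.exp ((y - z) * u) * g y = 0 := hy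
        have := mul_eq_zero.1 this
        rcases this with h' | h'
        · exact absurd h' (Real.exp_ne_zero _)
        · exact h'
      have : ∫ y, g y = 0 := by
        rw [integral_congr_ae hg0]; simp
      rw [hg_prob] at this; norm_num at this
  have hM0 : M 0 = 1 := by
    have : ∀ y : ℝ, Real.exp ((y - z) * 0) * g y = g y := by intro y; simp
    simp only [hMdef, this, hg_prob]
  have hMmeas : Measurable M := by
    have hsm : StronglyMeasurable fun p : ℝ × ℝ => Real.exp ((p.2 - z) * p.1) * g p.2 :=
      ((((measurable_snd.sub measurable_const).mul measurable_fst).exp).mul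
        (hg_meas.comp measurable_snd)).stronglyMeasurable
    exact hsm.integral_prod_right'.measurable
  -- convexity consequence: M (p*t) ≤ p * M t + (1-p)
  have hMconv : ∀ (t p : ℝ), 0 ≤ p → p ≤ 1 → M (p * t) ≤ p * M t + (1 - p) := by
    intro t p hp0 hp1
    have hle : ∀ y, Real.exp ((y - z) * (p * t)) * g y
        ≤ (p * Real.exp ((y - z) * t) + (1 - p)) * g y := by
      intro y
      have h := exp_convex_aux (a := (y - z) * t) hp0 hp1
      have he : (y - z) * (p * t) = p * ((y - z) * t) := by ring
      rw [he]
      exact mul_le_mul_of_nonneg_right h (hg_nonneg y)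
    have h1 : Integrable (fun y => (p * Real.exp ((y - z) * t) + (1 - p)) * g y) := by
      have := (((hint z t).const_mul p).add (hgint.const_mul (1 - p)))
      refine this.congr (ae_of_all _ fun y => ?_)
      simp only [Pi.add_apply]
      ring
    calc M (p * t) ≤ ∫ y, (p * Real.exp ((y - z) * t) + (1 - p)) * g y :=
          integral_mono (hint z (p * t)) h1 hle
      _ = p * M t + (1 - p) := by
          have : ∀ y : ℝ, (p * Real.exp ((y - z) * t) + (1 - p)) * g y
              = p * (Real.exp ((y - z) * t) * g y) + (1 - p) * g y := by intro y; ring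
          simp only [this]
          rw [integral_add ((hint z t).const_mul p) (hgint.const_mul (1 - p)),
            integral_const_mul, integral_const_mul, hg_prob, mul_one]
  -- the shifted Laplace transform Ψ
  set Ψ : ℝ → ℝ≥0∞ := fun x => ∫⁻ u, ENNReal.ofReal (Real.exp (-(x * u)) * M u) ∂ρ with hΨdef
  have hintmeas : ∀ x : ℝ, Measurable fun u : ℝ => ENNReal.ofReal (Real.exp (-(x * u)) * M u) :=
    fun x => (((measurable_const.mul measurable_id).neg.exp).mul hMmeas).ennreal_ofReal
  -- Tonelli identity
  have hconvΨ : ∀ t : ℝ, convT (laplaceT ρ) g t = Ψ (t - z) := by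
    intro t
    have h1 : convT (laplaceT ρ) g t
        = ∫⁻ y, ∫⁻ u, ENNReal.ofReal (Real.exp (-((t - y) * u))) * ENNReal.ofReal (g y) ∂ρ := by
      unfold convT laplaceT
      exact lintegral_congr fun y =>
        (lintegral_mul_const' _ _ ENNReal.ofReal_ne_top).symm
    have hswapmeas : AEMeasurable
        (Function.uncurry fun y u : ℝ =>
          ENNReal.ofReal (Real.exp (-((t - y) * u))) * ENNReal.ofReal (g y))
        (volume.prod ρ) := by
      apply Measurable.aemeasurable
      refine Measurable.mul (f := fun p : ℝ × ℝ => ENNReal.ofReal (Real.exp (-((t - p.1) * p.2))))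
        (g := fun p : ℝ × ℝ => ENNReal.ofReal (g p.1)) ?_ ?_
      · exact (((measurable_const.sub measurable_fst).mul measurable_snd).neg.exp).ennreal_ofReal
      · exact (hg_meas.comp measurable_fst).ennreal_ofReal
    have h2 := lintegral_lintegral_swap hswapmeas
    have h3 : ∀ u : ℝ,
        (∫⁻ y, ENNReal.ofReal (Real.exp (-((t - y) * u))) * ENNReal.ofReal (g y))
        = ENNReal.ofReal (Real.exp (-((t - z) * u)) * M u) := by
      intro u
      have e1 : ∀ y : ℝ, ENNReal.ofReal (Real.exp (-((t - y) * u))) * ENNReal.ofReal (g y)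
          = ENNReal.ofReal (Real.exp ((y - t) * u) * g y) := by
        intro y
        rw [← ENNReal.ofReal_mul (Real.exp_nonneg _)]
        congr 2
        ring
      simp only [e1]
      rw [← ofReal_integral_eq_lintegral_ofReal (hint t u)
        (ae_of_all _ fun y => mul_nonneg (Real.exp_nonneg _) (hg_nonneg y))]
      congr 1
      have e2 : ∀ y : ℝ, Real.exp ((y - t) * u) * g y
          = Real.exp (-((t - z) * u)) * (Real.exp ((y - z) * u) * g y) := by
        intro y; rw [← mul_assoc, ← Real.exp_add]; congr 2; ring
      simp only [e2]
      rw [integral_const_mul]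
    rw [h1, h2]
    exact lintegral_congr fun u => h3 u
  -- a.e. positivity of u
  have hae : ∀ᵐ u ∂ρ, 0 < u := by
    rw [ae_iff]
    have : {u : ℝ | ¬ 0 < u} = Set.Iic 0 := by ext u; simp [not_lt]
    rwa [this]
  have hΨfin : ∀ x : ℝ, Ψ x < ⊤ := by
    intro x
    have h := hconvΨ (x + z)
    rw [add_sub_cancel_right] at h
    rw [← h]
    exact hconv _
  have hΨanti : Antitone Ψ := by
    intro x x' hxx'
    refine lintegral_mono_ae (hae.mono fun u hu => ?_)
    refine ENNReal.ofReal_le_ofReal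
      (mul_le_mul_of_nonneg_right (Real.exp_le_exp.2 (by nlinarith)) (hMnonneg u))
  -- the set T
  set T : Set ℝ := {t : ℝ | 1 ≤ convT (laplaceT ρ) g t} with hTdef
  have hTmem : ∀ t : ℝ, t ∈ T ↔ 1 ≤ Ψ (t - z) := by
    intro t; rw [hTdef]; simp only [Set.mem_setOf_eq, hconvΨ t]
  -- T is nonempty
  have hTne : T.Nonempty := by
    have hsup : (⨆ n : ℕ, Ψ (-(n : ℝ))) = ⊤ := by
      have hmono : ∀ᵐ u ∂ρ, Monotone fun n : ℕ =>
          ENNReal.ofReal (Real.exp (-(-(n : ℝ) * u)) * M u) := by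
        refine hae.mono fun u hu => ?_
        intro n m hnm
        refine ENNReal.ofReal_le_ofReal
          (mul_le_mul_of_nonneg_right (Real.exp_le_exp.2 ?_) (hMnonneg u))
        have : (n : ℝ) ≤ (m : ℝ) := Nat.cast_le.2 hnm
        nlinarith
      have hswap := lintegral_iSup' (f := fun n : ℕ => fun u : ℝ =>
        ENNReal.ofReal (Real.exp (-(-(n : ℝ) * u)) * M u))
        (fun n => (hintmeas _).aemeasurable) hmono
      have htop : ∀ᵐ u ∂ρ,
          (⨆ n : ℕ, ENNReal.ofReal (Real.exp (-(-(n : ℝ) * u)) * M u)) = ⊤ := by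
        refine hae.mono fun u hu => ?_
        rw [iSup_eq_top]
        intro b hb
        have htend : Tendsto (fun n : ℕ => Real.exp (-(-(n : ℝ) * u)) * M u) atTop atTop := by
          have h1 : Tendsto (fun n : ℕ => Real.exp (-(-(n : ℝ) * u))) atTop atTop := by
            have he : ∀ n : ℕ, Real.exp (-(-(n : ℝ) * u)) = (Real.exp u) ^ n := by
              intro n
              rw [← Real.exp_nat_mul]
              congr 1; ring
            simp only [he]
            exact tendsto_pow_atTop_atTop_of_one_lt (by
              rw [show (1:ℝ) = Real.exp 0 by simp]
              exact Real.exp_lt_exp.2 hu)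
          exact Tendsto.atTop_mul_const (hMpos u) h1
        obtain ⟨n, hn⟩ := (htend.eventually_gt_atTop b.toReal).exists
        exact ⟨n, (ENNReal.lt_ofReal_iff_toReal_lt hb.ne).2 hn⟩
      have : (∫⁻ u, (⨆ n : ℕ, ENNReal.ofReal (Real.exp (-(-(n : ℝ) * u)) * M u)) ∂ρ) = ⊤ := by
        rw [lintegral_congr_ae htop, lintegral_const]
        simp
      have hgoal : (⨆ n : ℕ, ∫⁻ u, ENNReal.ofReal (Real.exp (-(-(n : ℝ) * u)) * M u) ∂ρ) = ⊤ := by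
        rw [← hswap]; exact this
      simpa [hΨdef] using hgoal
    obtain ⟨n, hn⟩ := iSup_eq_top.1 hsup 1 (by norm_num)
    refine ⟨z + (-(n : ℝ)), ?_⟩
    rw [hTmem, add_sub_cancel_left]
    exact hn.le
  -- T is bounded above
  have htend0 : Tendsto (fun n : ℕ => Ψ (n : ℝ)) atTop (nhds 0) := by
    have h0 : (0 : ℝ≥0∞) = ∫⁻ u : ℝ, (0 : ℝ≥0∞) ∂ρ := by simp
    rw [h0]
    refine tendsto_lintegral_of_dominated_convergence (fun u => ENNReal.ofReal (M u))
      (fun n => hintmeas _) (fun n => hae.mono fun u hu => ?_) ?_ (hae.mono fun u hu => ?_)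
    · refine ENNReal.ofReal_le_ofReal
        (mul_le_of_le_one_left (hMnonneg u) (Real.exp_le_one_iff.2 ?_))
      have : (0:ℝ) ≤ (n : ℝ) := Nat.cast_nonneg n
      nlinarith
    · have : (∫⁻ u : ℝ, ENNReal.ofReal (M u) ∂ρ) = Ψ 0 := by
        refine (lintegral_congr fun u => ?_).symm
        norm_num
      rw [this]
      exact (hΨfin 0).ne
    · have h1 : Tendsto (fun n : ℕ => Real.exp (-((n : ℝ) * u)) * M u) atTop (nhds 0) := by
        have he : ∀ n : ℕ, Real.exp (-((n : ℝ) * u)) = (Real.exp (-u)) ^ n := by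
          intro n; rw [← Real.exp_nat_mul]; congr 1; ring
        simp only [he]
        rw [show (0:ℝ) = 0 * M u by simp]
        refine Tendsto.mul_const _ ?_
        exact tendsto_pow_atTop_nhds_zero_of_lt_one (Real.exp_nonneg _)
          (by rw [show (1:ℝ) = Real.exp 0 by simp]; exact Real.exp_lt_exp.2 (by linarith))
      have := ENNReal.tendsto_ofReal h1
      simpa using this
  obtain ⟨N, hN⟩ := (htend0.eventually_lt_const (by norm_num : (0:ℝ≥0∞) < 1)).exists
  have hTbdd : BddAbove T := by
    refine ⟨z + (N : ℝ), fun t ht => ?_⟩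
    by_contra hc
    push_neg at hc
    have h1 : (N : ℝ) ≤ t - z := by linarith
    have h2 : Ψ (t - z) ≤ Ψ (N : ℝ) := hΨanti h1
    have h3 := (hTmem t).1 ht
    exact absurd (h3.trans h2) (not_le.2 hN)
  -- behavior around z = sSup T
  have hΨlt : ∀ x : ℝ, 0 < x → Ψ x < 1 := by
    intro x hx
    have hnotmem : z + x ∉ T := by
      intro hmem
      have := le_csSup hTbdd hmem
      rw [← hz] at this
      linarith
    rw [hTmem, add_sub_cancel_left] at hnotmem
    exact not_le.1 hnotmem
  have hΨge : ∀ x : ℝ, x < 0 → 1 ≤ Ψ x := by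
    intro x hx
    have hlt : z + x < sSup T := by rw [← hz]; linarith
    obtain ⟨t, htT, hlt'⟩ := exists_lt_of_lt_csSup hTne hlt
    have h1 := (hTmem t).1 htT
    exact h1.trans (hΨanti (by linarith : x ≤ t - z))
  -- Ψ 0 = 1
  have hΨ0eq : Ψ 0 = ∫⁻ u, ENNReal.ofReal (M u) ∂ρ := by
    refine lintegral_congr fun u => ?_
    norm_num
  have hmono_pt : ∀ u : ℝ, 0 < u → Monotone fun n : ℕ =>
      ENNReal.ofReal (Real.exp (-((1 / ((n : ℝ) + 1)) * u)) * M u) := by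
    intro u hu n m hnm
    refine ENNReal.ofReal_le_ofReal
      (mul_le_mul_of_nonneg_right (Real.exp_le_exp.2 ?_) (hMnonneg u))
    have h1 : (0:ℝ) < (n:ℝ) + 1 := by positivity
    have h3 : (n:ℝ) + 1 ≤ (m:ℝ) + 1 := by
      have : (n:ℝ) ≤ (m:ℝ) := Nat.cast_le.2 hnm
      linarith
    have h4 : 1 / ((m:ℝ) + 1) ≤ 1 / ((n:ℝ) + 1) := one_div_le_one_div_of_le h1 h3
    nlinarith
  have hΨ0le : Ψ 0 ≤ 1 := by
    have hswap := lintegral_iSup' (f := fun n : ℕ => fun u : ℝ =>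
      ENNReal.ofReal (Real.exp (-((1 / ((n : ℝ) + 1)) * u)) * M u))
      (fun n => (hintmeas _).aemeasurable) (hae.mono hmono_pt)
    have hlim : ∀ᵐ u ∂ρ,
        (⨆ n : ℕ, ENNReal.ofReal (Real.exp (-((1 / ((n : ℝ) + 1)) * u)) * M u))
        = ENNReal.ofReal (M u) := by
      refine hae.mono fun u hu => ?_
      have htends : Tendsto (fun n : ℕ =>
          ENNReal.ofReal (Real.exp (-((1 / ((n : ℝ) + 1)) * u)) * M u)) atTop
          (nhds (ENNReal.ofReal (M u))) := by
        refine ENNReal.tendsto_ofReal ?_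
        have h1 : Tendsto (fun n : ℕ => 1 / ((n : ℝ) + 1)) atTop (nhds 0) :=
          tendsto_one_div_add_atTop_nhds_zero_nat
        have h2 := ((Real.continuous_exp.tendsto _).comp ((h1.mul_const u).neg)).mul_const (M u)
        simpa [Function.comp] using h2
      exact tendsto_nhds_unique (tendsto_atTop_iSup (hmono_pt u hu)) htends
    have heq : Ψ 0 = ⨆ n : ℕ, Ψ (1 / ((n : ℝ) + 1)) := by
      rw [hΨ0eq, ← lintegral_congr_ae hlim, hswap]
    rw [heq]
    exact iSup_le fun n => (hΨlt _ (by positivity)).le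
  have hanti_pt : ∀ u : ℝ, 0 < u → Antitone fun n : ℕ =>
      ENNReal.ofReal (Real.exp (-(-(1 / ((n : ℝ) + 1)) * u)) * M u) := by
    intro u hu n m hnm
    refine ENNReal.ofReal_le_ofReal
      (mul_le_mul_of_nonneg_right (Real.exp_le_exp.2 ?_) (hMnonneg u))
    have h1 : (0:ℝ) < (n:ℝ) + 1 := by positivity
    have h3 : (n:ℝ) + 1 ≤ (m:ℝ) + 1 := by
      have : (n:ℝ) ≤ (m:ℝ) := Nat.cast_le.2 hnm
      linarith
    have h4 : 1 / ((m:ℝ) + 1) ≤ 1 / ((n:ℝ) + 1) := one_div_le_one_div_of_le h1 h3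
    nlinarith
  have hΨ0ge : 1 ≤ Ψ 0 := by
    have hswap := lintegral_iInf' (f := fun n : ℕ => fun u : ℝ =>
      ENNReal.ofReal (Real.exp (-(-(1 / ((n : ℝ) + 1)) * u)) * M u))
      (fun n => (hintmeas _).aemeasurable) (hae.mono hanti_pt)
      ((hΨfin (-(1 / ((0:ℕ) + 1 : ℝ)))).ne)
    have hlim : ∀ᵐ u ∂ρ,
        (⨅ n : ℕ, ENNReal.ofReal (Real.exp (-(-(1 / ((n : ℝ) + 1)) * u)) * M u))
        = ENNReal.ofReal (M u) := by
      refine hae.mono fun u hu => ?_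
      have htends : Tendsto (fun n : ℕ =>
          ENNReal.ofReal (Real.exp (-(-(1 / ((n : ℝ) + 1)) * u)) * M u)) atTop
          (nhds (ENNReal.ofReal (M u))) := by
        refine ENNReal.tendsto_ofReal ?_
        have h1 : Tendsto (fun n : ℕ => 1 / ((n : ℝ) + 1)) atTop (nhds 0) :=
          tendsto_one_div_add_atTop_nhds_zero_nat
        have h2 := ((Real.continuous_exp.tendsto _).comp (((h1.neg).mul_const u).neg)).mul_const (M u)
        simpa [Function.comp] using h2
      exact tendsto_nhds_unique (tendsto_atTop_iInf (hanti_pt u hu)) htends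
    have heq : Ψ 0 = ⨅ n : ℕ, Ψ (-(1 / ((n : ℝ) + 1))) := by
      rw [hΨ0eq, ← lintegral_congr_ae hlim, hswap]
    rw [heq]
    refine le_iInf fun n => hΨge _ ?_
    have : (0:ℝ) < 1 / ((n : ℝ) + 1) := by positivity
    linarith
  have hΨ01 : (∫⁻ u, ENNReal.ofReal (M u) ∂ρ) = 1 := by
    rw [← hΨ0eq]
    exact le_antisymm hΨ0le hΨ0ge
  -- final argument
  intro l hl
  have hS_rw : ∀ u : ℝ, ENNReal.ofReal (Real.exp (S u)) = ENNReal.ofReal (M u) := by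
    intro u; rw [hS u, Real.exp_log (hMpos u)]
  simp only [hS_rw]
  rcases hl.eq_or_lt with h0 | hlpos
  · subst h0
    have hnull : ρ (Set.Icc (0:ℝ) 0) = 0 := by
      rw [Set.Icc_self]
      exact measure_mono_null (by simp) hρsupp
    rw [setLIntegral_measure_zero _ _ hnull]
    exact zero_le
  · by_cases hMl : M l ≤ 1
    · have hpt : ∀ u ∈ Set.Icc (0:ℝ) l, ENNReal.ofReal (M u) ≤ 1 := by
        intro u hu
        have hp0 : 0 ≤ u / l := div_nonneg hu.1 hlpos.le
        have hp1 : u / l ≤ 1 := (div_le_one hlpos).2 hu.2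
        have heq : (u / l) * l = u := div_mul_cancel₀ u hlpos.ne'
        have hc := hMconv l (u / l) hp0 hp1
        rw [heq] at hc
        exact ENNReal.ofReal_le_one.2 (by nlinarith)
      calc (∫⁻ u in Set.Icc (0:ℝ) l, ENNReal.ofReal (M u) ∂ρ)
          ≤ ∫⁻ u in Set.Icc (0:ℝ) l, 1 ∂ρ := by
            refine lintegral_mono_ae ?_
            rw [ae_restrict_iff' measurableSet_Icc]
            exact ae_of_all _ hpt
        _ = ρ (Set.Icc (0:ℝ) l) := setLIntegral_one _
    · push_neg at hMl
      have hpt : ∀ u ∈ Set.Ioi l, (1:ℝ≥0∞) ≤ ENNReal.ofReal (M u) := by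
        intro u hu
        have hu' : l < u := hu
        have hupos : 0 < u := hlpos.trans hu'
        have hp0 : 0 ≤ l / u := div_nonneg hlpos.le hupos.le
        have hp1 : l / u ≤ 1 := (div_le_one hupos).2 hu'.le
        have heq : (l / u) * u = l := div_mul_cancel₀ l hupos.ne'
        have hc := hMconv u (l / u) hp0 hp1
        rw [heq] at hc
        have hppos : 0 < l / u := div_pos hlpos hupos
        exact ENNReal.one_le_ofReal.2 (by nlinarith)
      have hdisj : Disjoint (Set.Icc (0:ℝ) l) (Set.Ioi l) :=
        Set.disjoint_left.2 fun u hu hu' => absurd hu.2 (not_le.2 hu')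
      have hUn : Set.Icc (0:ℝ) l ∪ Set.Ioi l = Set.Ici 0 := by
        ext u
        simp only [Set.mem_union, Set.mem_Icc, Set.mem_Ioi, Set.mem_Ici]
        constructor
        · rintro (⟨h1, _⟩ | h1)
          · exact h1
          · linarith
        · intro h1
          rcases le_or_gt u l with h2 | h2
          · exact Or.inl ⟨h1, h2⟩
          · exact Or.inr h2
      have hfull : ρ.restrict (Set.Ici (0:ℝ)) = ρ :=
        Measure.restrict_eq_self_of_ae_mem (hae.mono fun u hu => hu.le)
      have hsplit : (∫⁻ u in Set.Icc (0:ℝ) l, ENNReal.ofReal (M u) ∂ρ)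
          + (∫⁻ u in Set.Ioi l, ENNReal.ofReal (M u) ∂ρ) = 1 := by
        rw [← lintegral_union measurableSet_Ioi hdisj, hUn]
        rw [show (∫⁻ u in Set.Ici (0:ℝ), ENNReal.ofReal (M u) ∂ρ)
            = ∫⁻ u, ENNReal.ofReal (M u) ∂ρ by rw [hfull]]
        exact hΨ01
      have hIci : ρ (Set.Ici (0:ℝ)) = 1 := by
        have h1 := measure_add_measure_compl (μ := ρ) (s := Set.Ici (0:ℝ)) measurableSet_Ici
        rw [compl_Ici] at h1
        have h2 : ρ (Set.Iio (0:ℝ)) = 0 :=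
          measure_mono_null Set.Iio_subset_Iic_self hρsupp
        rw [h2, add_zero] at h1
        rw [h1, measure_univ]
      have hmsplit : ρ (Set.Icc (0:ℝ) l) + ρ (Set.Ioi l) = 1 := by
        rw [← measure_union hdisj measurableSet_Ioi, hUn, hIci]
      have hb : ρ (Set.Ioi l) ≤ ∫⁻ u in Set.Ioi l, ENNReal.ofReal (M u) ∂ρ := by
        rw [← setLIntegral_one]
        refine lintegral_mono_ae ?_
        rw [ae_restrict_iff' measurableSet_Ioi]
        exact ae_of_all _ hpt
      have hfinIoi : ρ (Set.Ioi l) ≠ ⊤ := measure_ne_top ρ _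
      rw [← ENNReal.add_le_add_iff_right hfinIoi, hmsplit]
      calc (∫⁻ u in Set.Icc (0:ℝ) l, ENNReal.ofReal (M u) ∂ρ) + ρ (Set.Ioi l)
          ≤ (∫⁻ u in Set.Icc (0:ℝ) l, ENNReal.ofReal (M u) ∂ρ)
            + ∫⁻ u in Set.Ioi l, ENNReal.ofReal (M u) ∂ρ := add_le_add_right hb _
        _ = 1 := hsplit
end

section
/- Let ρ be a finite Borel measure on [0,∞) and let S : [0,∞) → ℝ be a convex function with S(0) = 0 such that ∫_{[0,∞)} e^{S(u)} dρ(u) = ρ([0,∞)) < ∞. Then for every λ ≥ 0, ∫_{[0,λ]} e^{S(u)} dρ(u) ≤ ρ([0,λ]). -/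
open MeasureTheory Set
open scoped ENNReal

/-- Let `ρ` be a finite Borel measure on `[0,∞)` and `S` a convex function on `[0,∞)` with
`S(0) = 0`, normalized so that `∫ e^{S(u)} dρ(u) = ρ([0,∞))`. Then for every `λ ≥ 0`,
`∫_{[0,λ]} e^{S(u)} dρ(u) = ρ([0,λ])`. -/
theorem convex_weight_concentration
    (ρ : Measure ℝ) [IsFiniteMeasure ρ] (hρsupp : ρ (Set.Iio 0) = 0)
    (S : ℝ → ℝ) (hS_convex : ConvexOn ℝ (Set.Ici 0) S) (hS0 : S 0 = 0)
    (hnorm : (∫⁻ u, ENNReal.ofReal (Real.exp (S u)) ∂ρ) = ρ Set.univ) :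
    ∀ l : ℝ, 0 ≤ l →
      (∫⁻ u in Set.Icc (0:ℝ) l, ENNReal.ofReal (Real.exp (S u)) ∂ρ) ≤ ρ (Set.Icc (0:ℝ) l) := by
  intro l hl
  set f : ℝ → ℝ≥0∞ := fun u => ENNReal.ofReal (Real.exp (S u)) with hf
  by_cases hcase : ∀ x ∈ Set.Icc (0:ℝ) l, S x ≤ 0
  · calc ∫⁻ u in Set.Icc (0:ℝ) l, f u ∂ρ
        ≤ ∫⁻ _ in Set.Icc (0:ℝ) l, 1 ∂ρ := by
          refine lintegral_mono_ae ?_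
          refine (ae_restrict_iff' measurableSet_Icc).2 (ae_of_all _ fun x hx => ?_)
          simp only [hf]
          rw [← ENNReal.ofReal_one]
          exact ENNReal.ofReal_le_ofReal (Real.exp_le_one_iff.2 (hcase x hx))
      _ = ρ (Set.Icc (0:ℝ) l) := setLIntegral_one _
  · push_neg at hcase
    obtain ⟨u, hu, hSu⟩ := hcase
    have hu0 : 0 < u := by
      rcases hu.1.lt_or_eq with h | h
      · exact h
      · exfalso; rw [← h, hS0] at hSu; exact lt_irrefl 0 hSu
    have key : ∀ v, l < v → 0 < S v := by
      intro v hv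
      have huv : u < v := lt_of_le_of_lt hu.2 hv
      have hv0 : 0 < v := hu0.trans huv
      have ha : (0:ℝ) ≤ 1 - u / v := by
        have : u / v ≤ 1 := (div_le_one hv0).2 huv.le
        linarith
      have hb : (0:ℝ) ≤ u / v := div_nonneg hu0.le hv0.le
      have hab : (1 - u / v) + u / v = 1 := by ring
      have hcomb := hS_convex.2 (self_mem_Ici (α := ℝ)) (mem_Ici.2 hv0.le) ha hb hab
      simp only [smul_eq_mul, mul_zero, zero_add, hS0, mul_zero] at hcomb
      -- hcomb : S ((1 - u/v) * 0 + (u/v) * v) ≤ (1-u/v)*0 + (u/v) * S v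
      have harg : (u / v) * v = u := div_mul_cancel₀ u hv0.ne'
      rw [harg] at hcomb
      by_contra hneg
      push_neg at hneg
      have : (u / v) * S v ≤ 0 := mul_nonpos_of_nonneg_of_nonpos hb hneg
      linarith
    -- On the complement of Icc 0 l, a.e. f ≥ 1
    have hcompl : ρ ((Set.Icc (0:ℝ) l)ᶜ) ≤ ∫⁻ u in (Set.Icc (0:ℝ) l)ᶜ, f u ∂ρ := by
      have : ∫⁻ _ in (Set.Icc (0:ℝ) l)ᶜ, (1:ℝ≥0∞) ∂ρ ≤ ∫⁻ u in (Set.Icc (0:ℝ) l)ᶜ, f u ∂ρ := by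
        refine lintegral_mono_ae ?_
        rw [ae_restrict_iff' measurableSet_Icc.compl]
        have hsub : {x : ℝ | ¬ (x ∈ (Set.Icc (0:ℝ) l)ᶜ → (1:ℝ≥0∞) ≤ f x)} ⊆ Set.Iio 0 := by
          intro x hx
          simp only [Set.mem_setOf_eq] at hx
          rw [Classical.not_imp] at hx
          obtain ⟨hxc, hxf⟩ := hx
          by_contra hx0
          simp only [Set.mem_Iio, not_lt] at hx0
          have hxl : l < x := by
            by_contra h
            push_neg at h
            exact hxc ⟨hx0, h⟩
          have hSx := key x hxl
          apply hxf
          simp only [hf]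
          rw [← ENNReal.ofReal_one]
          exact ENNReal.ofReal_le_ofReal (Real.one_le_exp hSx.le)
        exact measure_mono_null hsub hρsupp
      rwa [setLIntegral_one] at this
    have hsplit : (∫⁻ u in Set.Icc (0:ℝ) l, f u ∂ρ) + (∫⁻ u in (Set.Icc (0:ℝ) l)ᶜ, f u ∂ρ)
        = ρ (Set.Icc (0:ℝ) l) + ρ ((Set.Icc (0:ℝ) l)ᶜ) := by
      rw [lintegral_add_compl f measurableSet_Icc, hnorm,
        measure_add_measure_compl measurableSet_Icc]
    have hfin : (∫⁻ u in (Set.Icc (0:ℝ) l)ᶜ, f u ∂ρ) ≠ ⊤ := by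
      refine ne_top_of_le_ne_top ?_ (le_trans (setLIntegral_le_lintegral _ _) (le_of_eq hnorm))
      exact measure_ne_top ρ _
    have : (∫⁻ u in Set.Icc (0:ℝ) l, f u ∂ρ) + (∫⁻ u in (Set.Icc (0:ℝ) l)ᶜ, f u ∂ρ)
        ≤ ρ (Set.Icc (0:ℝ) l) + (∫⁻ u in (Set.Icc (0:ℝ) l)ᶜ, f u ∂ρ) := by
      rw [hsplit]
      exact add_le_add_right hcompl _
    exact (ENNReal.add_le_add_iff_right hfin).1 this
end

section
/- Let ρ be a Borel probability measure on (0,∞) with Laplace transform F = R_ρ (so F(0) = 1), and let g be a probability density on ℝ with ∫_ℝ e^{sy} g(y) dy < ∞ for every s ∈ ℝ such that (F * g)(x) < ∞ for every x ∈ ℝ. Then 𝒩(F * g)(x) ≤ F(x) for every x ≥ 0, and 𝒩(F * g)(x) ≥ F(x) for every x ≤ 0. -/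
open MeasureTheory Filter Set
open scoped ENNReal
open scoped Topology

noncomputable def Mfun (g : ℝ → ℝ) (u : ℝ) : ℝ≥0∞ :=
  ∫⁻ y, ENNReal.ofReal (Real.exp (u * y) * g y)

lemma mfun_meas (g : ℝ → ℝ) (hg : Measurable g) : Measurable (Mfun g) := by
  apply Measurable.lintegral_prod_right'
    (f := fun p : ℝ × ℝ => ENNReal.ofReal (Real.exp (p.1 * p.2) * g p.2))
  exact ((Real.measurable_exp.comp (measurable_fst.mul measurable_snd)).mul
    (hg.comp measurable_snd)).ennreal_ofReal

lemma mfun_zero (g : ℝ → ℝ) (hg_nonneg : ∀ y, 0 ≤ g y) (hg_prob : ∫ y, g y = 1) :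
    Mfun g 0 = 1 := by
  have hg_int : Integrable g := by
    by_contra h
    rw [integral_undef h] at hg_prob
    exact one_ne_zero hg_prob.symm
  have : Mfun g 0 = ∫⁻ y, ENNReal.ofReal (g y) := by
    unfold Mfun; congr 1; funext y; simp
  rw [this, ← ofReal_integral_eq_lintegral_ofReal hg_int (ae_of_all _ hg_nonneg), hg_prob,
    ENNReal.ofReal_one]

lemma mfun_holder (g : ℝ → ℝ) (hg : Measurable g) (hg0 : ∀ y, 0 ≤ g y)
    {θ : ℝ} (hθ : 0 < θ) (hθ1 : θ < 1) (v : ℝ) :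
    Mfun g (θ * v) ≤ (Mfun g v) ^ θ * (Mfun g 0) ^ (1 - θ) := by
  have hmeas : ∀ s : ℝ, AEMeasurable (fun y => ENNReal.ofReal (Real.exp (s * y) * g y)) := by
    intro s
    exact (((Real.measurable_exp.comp (measurable_const.mul measurable_id)).mul
      hg).ennreal_ofReal).aemeasurable
  have key : ∀ y : ℝ, ENNReal.ofReal (Real.exp (θ * v * y) * g y) =
      (ENNReal.ofReal (Real.exp (v * y) * g y)) ^ θ *
      (ENNReal.ofReal (Real.exp (0 * y) * g y)) ^ (1 - θ) := by
    intro y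
    rw [ENNReal.ofReal_rpow_of_nonneg (mul_nonneg (Real.exp_pos _).le (hg0 y)) hθ.le,
      ENNReal.ofReal_rpow_of_nonneg (mul_nonneg (Real.exp_pos _).le (hg0 y)) (by linarith),
      ← ENNReal.ofReal_mul (Real.rpow_nonneg (mul_nonneg (Real.exp_pos _).le (hg0 y)) _)]
    congr 1
    rw [Real.mul_rpow (Real.exp_pos _).le (hg0 y), Real.mul_rpow (Real.exp_pos _).le (hg0 y),
      ← Real.exp_mul, ← Real.exp_mul]
    have hgsplit : g y ^ θ * g y ^ (1 - θ) = g y := by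
      rw [← Real.rpow_add' (hg0 y) (by norm_num), add_sub_cancel, Real.rpow_one]
    calc Real.exp (θ * v * y) * g y = Real.exp (v * y * θ) * (g y ^ θ * g y ^ (1-θ)) := by
          rw [hgsplit]; ring_nf
      _ = Real.exp (v * y * θ) * g y ^ θ * (Real.exp (0 * y * (1-θ)) * g y ^ (1 - θ)) := by
          simp [Real.exp_zero]; ring
  calc Mfun g (θ * v) = ∫⁻ y, (ENNReal.ofReal (Real.exp (v * y) * g y)) ^ θ *
      (ENNReal.ofReal (Real.exp (0 * y) * g y)) ^ (1 - θ) := by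
        unfold Mfun; exact lintegral_congr key
    _ ≤ _ := ENNReal.lintegral_mul_norm_pow_le (hmeas v) (hmeas 0) hθ.le (by linarith)
        (by ring)

lemma convT_eq (ρ : Measure ℝ) [IsProbabilityMeasure ρ] (g : ℝ → ℝ) (hg : Measurable g)
    (x : ℝ) :
    convT (laplaceT ρ) g x = ∫⁻ u, ENNReal.ofReal (Real.exp (-(x * u))) * Mfun g u ∂ρ := by
  have hmeas1 : ∀ u : ℝ, Measurable fun y => ENNReal.ofReal (Real.exp (u * y) * g y) :=
    fun u => ((Real.measurable_exp.comp (measurable_const.mul measurable_id)).mul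
      hg).ennreal_ofReal
  calc convT (laplaceT ρ) g x
      = ∫⁻ y, ∫⁻ u, ENNReal.ofReal (Real.exp (-((x - y) * u))) * ENNReal.ofReal (g y) ∂ρ := by
        unfold convT laplaceT
        congr 1; funext y
        exact (lintegral_mul_const _ ((Real.measurable_exp.comp
          ((measurable_const.mul measurable_id).neg)).ennreal_ofReal)).symm
    _ = ∫⁻ u, ∫⁻ y, ENNReal.ofReal (Real.exp (-((x - y) * u))) * ENNReal.ofReal (g y)
          ∂(volume) ∂ρ := by
        apply lintegral_lintegral_swap
        apply Measurable.aemeasurable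
        simp only [Function.uncurry_def]
        apply Measurable.fun_mul
        · exact (Real.measurable_exp.comp
            (((measurable_const.sub measurable_fst).mul measurable_snd).neg)).ennreal_ofReal
        · exact (hg.comp measurable_fst).ennreal_ofReal
    _ = ∫⁻ u, ∫⁻ y, ENNReal.ofReal (Real.exp (-(x * u))) *
          ENNReal.ofReal (Real.exp (u * y) * g y) ∂(volume) ∂ρ := by
        congr 1; funext u; congr 1; funext y
        rw [← ENNReal.ofReal_mul (Real.exp_pos _).le, ← ENNReal.ofReal_mul (Real.exp_pos _).le]
        congr 1
        rw [← mul_assoc, ← Real.exp_add]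
        congr 2
        ring
    _ = ∫⁻ u, ENNReal.ofReal (Real.exp (-(x * u))) * Mfun g u ∂ρ := by
        congr 1; funext u
        exact lintegral_const_mul _ (hmeas1 u)

/-- Let `ρ` be a probability measure on `(0,∞)` with Laplace transform `F = R_ρ` (so
`F(0) = 1`), and `g` a probability density with all exponential moments such that
`(F * g)(x) < ∞` everywhere. Then `𝒩(F * g) ≤ F` on `[0,∞)` and `𝒩(F * g) ≥ F` on `(-∞,0]`. -/
theorem normShift_conv_crossing
    (ρ : Measure ℝ) [IsProbabilityMeasure ρ] (hρsupp : ρ (Set.Iic 0) = 0)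
    (g : ℝ → ℝ) (hg_meas : Measurable g) (hg_nonneg : ∀ y, 0 ≤ g y)
    (hg_prob : ∫ y, g y = 1)
    (hg_exp : ∀ s : ℝ, (∫⁻ y, ENNReal.ofReal (Real.exp (s * y) * g y)) < ⊤)
    (hconv : ∀ x : ℝ, convT (laplaceT ρ) g x < ⊤) :
    (∀ x : ℝ, 0 ≤ x → normShiftT (convT (laplaceT ρ) g) x ≤ laplaceT ρ x) ∧
    (∀ x : ℝ, x ≤ 0 → laplaceT ρ x ≤ normShiftT (convT (laplaceT ρ) g) x) := by
  classical
  set Mf := Mfun g with hMfdef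
  have hMmeas : Measurable Mf := mfun_meas g hg_meas
  have hMlt : ∀ u, Mf u ≠ ∞ := fun u => by
    have : Mf u = ∫⁻ y, ENNReal.ofReal (Real.exp (u * y) * g y) := rfl
    rw [this]; exact (hg_exp u).ne
  have hM0 : Mf 0 = 1 := mfun_zero g hg_nonneg hg_prob
  have hMne : ∀ u, Mf u ≠ 0 := by
    intro u hMu
    have hmeasu : Measurable fun y => ENNReal.ofReal (Real.exp (u * y) * g y) :=
      ((Real.measurable_exp.comp (measurable_const.mul measurable_id)).mul
        hg_meas).ennreal_ofReal
    have h0 : ∀ᵐ y, ENNReal.ofReal (Real.exp (u * y) * g y) = 0 :=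
      (lintegral_eq_zero_iff hmeasu).1 hMu
    have hgz : ∀ᵐ y, ENNReal.ofReal (Real.exp (0 * y) * g y) = 0 := by
      filter_upwards [h0] with y hy
      have h1 : Real.exp (u * y) * g y ≤ 0 := by
        simpa [ENNReal.ofReal_eq_zero] using hy
      have hgy : g y ≤ 0 := by nlinarith [Real.exp_pos (u * y)]
      rw [ENNReal.ofReal_eq_zero]
      nlinarith [Real.exp_pos (0 * y)]
    have hz : Mf 0 = 0 := by
      have : Mf 0 = ∫⁻ y, ENNReal.ofReal (Real.exp (0 * y) * g y) := rfl
      rw [this, lintegral_eq_zero_iff (by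
        exact ((Real.measurable_exp.comp (measurable_const.mul measurable_id)).mul
          hg_meas).ennreal_ofReal)]
      exact hgz
    rw [hM0] at hz; exact one_ne_zero hz
  set G : ℝ → ℝ≥0∞ := fun x => ∫⁻ u, ENNReal.ofReal (Real.exp (-(x * u))) * Mf u ∂ρ
    with hGdef
  have hfun : convT (laplaceT ρ) g = G := funext fun x => convT_eq ρ g hg_meas x
  have hGlt : ∀ x, G x ≠ ∞ := fun x => by rw [← hfun]; exact (hconv x).ne
  have haepos : ∀ᵐ u ∂ρ, 0 < u := by
    have hs : {u : ℝ | ¬ 0 < u} = Set.Iic 0 := by ext u; simp [not_lt]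
    rw [ae_iff, hs]; exact hρsupp
  have hGmeasInt : ∀ x : ℝ, Measurable fun u => ENNReal.ofReal (Real.exp (-(x * u))) * Mf u :=
    fun x => ((Real.measurable_exp.comp
      ((measurable_const.mul measurable_id).neg)).ennreal_ofReal).mul hMmeas
  have hGmono : ∀ {x y : ℝ}, x ≤ y → G y ≤ G x := by
    intro x y hxy
    refine lintegral_mono_ae ?_
    filter_upwards [haepos] with u hu
    exact mul_le_mul_left (ENNReal.ofReal_le_ofReal (Real.exp_le_exp.2 (by nlinarith))) _
  have hDCT : ∀ (b : ℝ) (xs : ℕ → ℝ) (xl : ℝ), (∀ n, b ≤ xs n) →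
      Tendsto xs atTop (𝓝 xl) → Tendsto (fun n => G (xs n)) atTop (𝓝 (G xl)) := by
    intro b xs xl hb hx
    refine tendsto_lintegral_of_dominated_convergence
      (fun u => ENNReal.ofReal (Real.exp (-(b * u))) * Mf u)
      (fun n => hGmeasInt (xs n)) ?_ (hGlt b) ?_
    · intro n
      filter_upwards [haepos] with u hu
      exact mul_le_mul_left (ENNReal.ofReal_le_ofReal
        (Real.exp_le_exp.2 (by nlinarith [hb n]))) _
    · refine ae_of_all _ fun u => ?_
      have h1 : Tendsto (fun n => Real.exp (-(xs n * u))) atTop (𝓝 (Real.exp (-(xl * u)))) :=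
        (Real.continuous_exp.tendsto _).comp ((hx.mul_const u).neg)
      exact ENNReal.Tendsto.mul_const (ENNReal.tendsto_ofReal h1) (Or.inr (hMlt u))
  -- S nonempty
  have hSne : ∃ x : ℝ, 1 ≤ G x := by
    by_contra hno
    push_neg at hno
    have hmeasn : ∀ n : ℕ, AEMeasurable
        (fun u => ENNReal.ofReal (Real.exp ((n : ℝ) * u)) * Mf u) ρ := fun n =>
      (((Real.measurable_exp.comp (measurable_const.mul measurable_id)).ennreal_ofReal).mul
        hMmeas).aemeasurable
    have hmono : ∀ᵐ u ∂ρ, Monotone fun n : ℕ => ENNReal.ofReal (Real.exp ((n : ℝ) * u)) * Mf u := by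
      filter_upwards [haepos] with u hu
      intro m n hmn
      have hmn' : (m : ℝ) ≤ n := Nat.cast_le.2 hmn
      exact mul_le_mul_left (ENNReal.ofReal_le_ofReal (Real.exp_le_exp.2 (by nlinarith))) _
    have hsup := lintegral_iSup' hmeasn hmono
    have htop : (∫⁻ u, ⨆ n : ℕ, ENNReal.ofReal (Real.exp ((n : ℝ) * u)) * Mf u ∂ρ) = ∞ := by
      have hae : ∀ᵐ u ∂ρ, (⨆ n : ℕ, ENNReal.ofReal (Real.exp ((n : ℝ) * u)) * Mf u) = ∞ := by
        filter_upwards [haepos] with u hu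
        rw [← ENNReal.iSup_mul]
        refine ENNReal.mul_eq_top.2 (Or.inr ⟨?_, hMne u⟩)
        rw [iSup_eq_top]
        intro b hb
        have ht : Tendsto (fun n : ℕ => Real.exp ((n : ℝ) * u)) atTop atTop :=
          Real.tendsto_exp_atTop.comp (tendsto_natCast_atTop_atTop.atTop_mul_const hu)
        obtain ⟨n, hn⟩ := (ht.eventually_gt_atTop b.toReal).exists
        exact ⟨n, (ENNReal.lt_ofReal_iff_toReal_lt hb.ne).2 hn⟩
      rw [lintegral_congr_ae hae, lintegral_const, measure_univ, mul_one]
    rw [hsup] at htop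
    have hle : (⨆ n : ℕ, ∫⁻ u, ENNReal.ofReal (Real.exp ((n : ℝ) * u)) * Mf u ∂ρ) ≤ 1 := by
      refine iSup_le fun n => ?_
      have h2 : (∫⁻ u, ENNReal.ofReal (Real.exp ((n : ℝ) * u)) * Mf u ∂ρ) = G (-(n : ℝ)) := by
        simp only [hGdef, neg_mul, neg_neg]
      rw [h2]; exact (hno _).le
    rw [htop] at hle
    simp at hle
  have hSex : ∃ w : ℝ, G w < 1 := by
    have hlim : Tendsto (fun n : ℕ => G (n : ℝ)) atTop (𝓝 (∫⁻ _, 0 ∂ρ)) := by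
      refine tendsto_lintegral_of_dominated_convergence
        (fun u => ENNReal.ofReal (Real.exp (-(0 * u))) * Mf u)
        (fun n => hGmeasInt _) ?_ (hGlt 0) ?_
      · intro n
        filter_upwards [haepos] with u hu
        exact mul_le_mul_left (ENNReal.ofReal_le_ofReal
          (Real.exp_le_exp.2 (by nlinarith [Nat.cast_nonneg (α := ℝ) n]))) _
      · filter_upwards [haepos] with u hu
        have h2 : Tendsto (fun n : ℕ => -((n : ℝ) * u)) atTop atBot :=
          tendsto_neg_atBot_iff.2 (tendsto_natCast_atTop_atTop.atTop_mul_const hu)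
        have h1 : Tendsto (fun n : ℕ => Real.exp (-((n : ℝ) * u))) atTop (𝓝 0) :=
          Real.tendsto_exp_atBot.comp h2
        have := ENNReal.Tendsto.mul_const (ENNReal.tendsto_ofReal h1) (b := Mf u)
          (Or.inr (hMlt u))
        simpa using this
    rw [lintegral_zero] at hlim
    obtain ⟨n, hn⟩ := (hlim.eventually_lt_const (by norm_num : (0 : ℝ≥0∞) < 1)).exists
    exact ⟨n, hn⟩
  have hSne' : {t : ℝ | 1 ≤ G t}.Nonempty := hSne
  have hSbdd : BddAbove {t : ℝ | 1 ≤ G t} := by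
    obtain ⟨w, hw⟩ := hSex
    refine ⟨w, fun t ht => ?_⟩
    by_contra hlt
    push_neg at hlt
    exact absurd (le_trans ht (hGmono hlt.le)) (not_le.2 hw)
  set z := sSup {t : ℝ | 1 ≤ G t} with hzdef
  have hzub : ∀ t, 1 ≤ G t → t ≤ z := fun t ht => le_csSup hSbdd ht
  have hGz_ge : 1 ≤ G z := by
    have hseq : ∀ n : ℕ, 1 ≤ G (z - 1 / (n + 1)) := by
      intro n
      have hpos : (0 : ℝ) < 1 / (n + 1) := by positivity
      have hlt : z - 1 / (n + 1) < z := by linarith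
      obtain ⟨t, htS, hlt'⟩ := exists_lt_of_lt_csSup hSne' hlt
      exact le_trans htS (hGmono hlt'.le)
    have hlim := hDCT (z - 1) (fun n : ℕ => z - 1 / (n + 1)) z
      (fun n => by
        have h1 : (0:ℝ) < (n:ℝ) + 1 := by positivity
        have : 1 / ((n : ℝ) + 1) ≤ 1 := by
          rw [div_le_one h1]; linarith [Nat.cast_nonneg (α := ℝ) n]
        linarith)
      (by
        have h0 : Tendsto (fun n : ℕ => 1 / ((n : ℝ) + 1)) atTop (𝓝 0) :=
          tendsto_one_div_add_atTop_nhds_zero_nat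
        simpa using tendsto_const_nhds.sub h0)
    exact ge_of_tendsto hlim (Eventually.of_forall hseq)
  have hGz_le : G z ≤ 1 := by
    have hseq : ∀ n : ℕ, G (z + 1 / (n + 1)) ≤ 1 := by
      intro n
      by_contra h
      push_neg at h
      have hmem := hzub _ h.le
      have hpos : (0 : ℝ) < 1 / (n + 1) := by positivity
      linarith
    have hlim := hDCT z (fun n : ℕ => z + 1 / (n + 1)) z
      (fun n => by
        have hpos : (0 : ℝ) < 1 / ((n:ℝ) + 1) := by positivity
        linarith)
      (by
        have h0 : Tendsto (fun n : ℕ => 1 / ((n : ℝ) + 1)) atTop (𝓝 0) :=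
          tendsto_one_div_add_atTop_nhds_zero_nat
        simpa using tendsto_const_nhds.add h0)
    exact le_of_tendsto hlim (Eventually.of_forall hseq)
  have hGz : G z = 1 := le_antisymm hGz_le hGz_ge
  -- the log-convex density h
  set hr : ℝ → ℝ := fun u => Real.exp (-(z * u)) * (Mf u).toReal with hrdef
  have hr_nonneg : ∀ u, 0 ≤ hr u := fun u =>
    mul_nonneg (Real.exp_pos _).le ENNReal.toReal_nonneg
  have hofr : ∀ u, ENNReal.ofReal (hr u) = ENNReal.ofReal (Real.exp (-(z * u))) * Mf u := by
    intro u
    rw [hrdef]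
    simp only []
    rw [ENNReal.ofReal_mul (Real.exp_pos _).le, ENNReal.ofReal_toReal (hMlt u)]
  have hrmeas : Measurable fun u => ENNReal.ofReal (hr u) := by
    have he : (fun u => ENNReal.ofReal (hr u)) =
        fun u => ENNReal.ofReal (Real.exp (-(z * u))) * Mf u := funext hofr
    rw [he]; exact hGmeasInt z
  have hint_hr : (∫⁻ u, ENNReal.ofReal (hr u) ∂ρ) = 1 := by
    rw [lintegral_congr hofr]; exact hGz
  have hkey : ∀ u v : ℝ, 0 < u → u < v → hr v < 1 → hr u < 1 := by
    intro u v hu huv hv1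
    have hv0 : 0 < v := hu.trans huv
    set θ := u / v with hθdef
    have hθ : 0 < θ := div_pos hu hv0
    have hθ1 : θ < 1 := (div_lt_one hv0).2 huv
    have huv' : θ * v = u := div_mul_cancel₀ u hv0.ne'
    have hM := mfun_holder g hg_meas hg_nonneg hθ hθ1 v
    rw [huv'] at hM
    rw [show Mfun g 0 = 1 from hM0, ENNReal.one_rpow, mul_one] at hM
    have hMtoReal : (Mf u).toReal ≤ (Mf v).toReal ^ θ := by
      have h1 : ((Mf v) ^ θ).toReal = (Mf v).toReal ^ θ := (ENNReal.toReal_rpow _ _).symm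
      rw [← h1]
      exact ENNReal.toReal_mono (ENNReal.rpow_ne_top_of_nonneg hθ.le (hMlt v)) hM
    have hle : hr u ≤ (hr v) ^ θ := by
      rw [hrdef]
      simp only []
      calc Real.exp (-(z * u)) * (Mf u).toReal
          ≤ Real.exp (-(z * u)) * (Mf v).toReal ^ θ :=
            mul_le_mul_of_nonneg_left hMtoReal (Real.exp_pos _).le
        _ = (Real.exp (-(z * v)) * (Mf v).toReal) ^ θ := by
            rw [Real.mul_rpow (Real.exp_pos _).le ENNReal.toReal_nonneg, ← Real.exp_mul]
            congr 2
            rw [← huv']; ring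
    calc hr u ≤ (hr v) ^ θ := hle
      _ < 1 := Real.rpow_lt_one (hr_nonneg v) hv1 hθ
  -- single crossing point
  obtain ⟨a, H1, H2⟩ : ∃ a : ℝ, (∀ u, 0 < u → u < a → hr u ≤ 1) ∧
      (∀ u, 0 < u → a < u → 1 ≤ hr u) := by
    by_cases hbdd : BddAbove {u : ℝ | 0 < u ∧ hr u < 1}
    · by_cases hne : {u : ℝ | 0 < u ∧ hr u < 1}.Nonempty
      · refine ⟨sSup {u : ℝ | 0 < u ∧ hr u < 1}, ?_, ?_⟩
        · intro u hu hua
          obtain ⟨v, hvT, huv⟩ := exists_lt_of_lt_csSup hne hua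
          exact (hkey u v hu huv hvT.2).le
        · intro u hu hau
          by_contra hlt
          push_neg at hlt
          exact absurd (le_csSup hbdd ⟨hu, hlt⟩) (not_le.2 hau)
      · refine ⟨0, fun u hu hu0 => absurd hu0 (not_lt.2 hu.le), fun u hu _ => ?_⟩
        by_contra hlt
        push_neg at hlt
        exact hne ⟨u, hu, hlt⟩
    · exfalso
      rw [not_bddAbove_iff] at hbdd
      have hall : ∀ u, 0 < u → hr u < 1 := by
        intro u hu
        obtain ⟨v, hvT, huv⟩ := hbdd u
        exact hkey u v hu huv hvT.2
      have hle : (fun u => ENNReal.ofReal (hr u)) ≤ᵐ[ρ] fun _ => 1 := by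
        filter_upwards [haepos] with u hu
        exact ENNReal.ofReal_le_one.2 (hall u hu).le
      have heq := ae_eq_of_ae_le_of_lintegral_le hle
        (by rw [hint_hr]; exact ENNReal.one_ne_top) aemeasurable_const
        (by rw [hint_hr]; simp [lintegral_one])
      haveI : (ae ρ).NeBot := ae_neBot.mpr (IsProbabilityMeasure.ne_zero ρ)
      have hfalse : ∀ᵐ u ∂ρ, False := by
        filter_upwards [heq, haepos] with u h1 h2
        have hlt1 := ENNReal.ofReal_lt_one.2 (hall u h2)
        rw [h1] at hlt1
        exact lt_irrefl _ hlt1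
      obtain ⟨u, hu⟩ := hfalse.exists
      exact hu
  -- final inequalities
  have hnorm : ∀ x : ℝ, normShiftT (convT (laplaceT ρ) g) x = G (x + z) := by
    intro x
    simp only [normShiftT, hfun, hzdef]
  have hclaim1 : ∀ x : ℝ, G (x + z) = ∫⁻ u, ENNReal.ofReal (Real.exp (-(x * u)) * hr u) ∂ρ := by
    intro x
    simp only [hGdef]
    refine lintegral_congr fun u => ?_
    rw [ENNReal.ofReal_mul (Real.exp_pos _).le, hofr u, ← mul_assoc,
      ← ENNReal.ofReal_mul (Real.exp_pos _).le, ← Real.exp_add]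
    congr 2
    ring
  have hlapl : ∀ x : ℝ, laplaceT ρ x =
      ∫⁻ u, ENNReal.ofReal (Real.exp (-(x * u))) ∂ρ := fun _ => rfl
  constructor
  · intro x hx
    rw [hnorm x]
    set c := ENNReal.ofReal (Real.exp (-(x * a))) with hcdef
    have hpoint : ∀ᵐ u ∂ρ, ENNReal.ofReal (Real.exp (-(x * u)) * hr u) + c ≤
        ENNReal.ofReal (Real.exp (-(x * u))) + c * ENNReal.ofReal (hr u) := by
      filter_upwards [haepos] with u hu
      rw [hcdef, ← ENNReal.ofReal_mul (Real.exp_pos _).le,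
        ← ENNReal.ofReal_add (mul_nonneg (Real.exp_pos _).le (hr_nonneg u)) (Real.exp_pos _).le,
        ← ENNReal.ofReal_add (Real.exp_pos _).le
          (mul_nonneg (Real.exp_pos _).le (hr_nonneg u))]
      apply ENNReal.ofReal_le_ofReal
      rcases lt_trichotomy u a with h | h | h
      · have ht : hr u ≤ 1 := H1 u hu h
        have hpq : Real.exp (-(x * a)) ≤ Real.exp (-(x * u)) :=
          Real.exp_le_exp.2 (by nlinarith)
        nlinarith [hr_nonneg u, Real.exp_pos (-(x * u)), Real.exp_pos (-(x * a))]
      · rw [h]; nlinarith [Real.exp_pos (-(x * a))]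
      · have ht : 1 ≤ hr u := H2 u hu h
        have hpq : Real.exp (-(x * u)) ≤ Real.exp (-(x * a)) :=
          Real.exp_le_exp.2 (by nlinarith)
        nlinarith [hr_nonneg u, Real.exp_pos (-(x * u)), Real.exp_pos (-(x * a))]
    have hmain := lintegral_mono_ae hpoint
    rw [lintegral_add_right _ measurable_const, lintegral_const, measure_univ, mul_one,
      lintegral_add_right _ (hrmeas.const_mul _),
      lintegral_const_mul _ hrmeas, hint_hr, mul_one, ← hclaim1 x] at hmain
    exact (ENNReal.add_le_add_iff_right ENNReal.ofReal_ne_top).1 hmain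
  · intro x hx
    rw [hnorm x]
    set c := ENNReal.ofReal (Real.exp (-(x * a))) with hcdef
    have hpoint : ∀ᵐ u ∂ρ, ENNReal.ofReal (Real.exp (-(x * u))) + c * ENNReal.ofReal (hr u) ≤
        ENNReal.ofReal (Real.exp (-(x * u)) * hr u) + c := by
      filter_upwards [haepos] with u hu
      rw [hcdef, ← ENNReal.ofReal_mul (Real.exp_pos _).le,
        ← ENNReal.ofReal_add (mul_nonneg (Real.exp_pos _).le (hr_nonneg u)) (Real.exp_pos _).le,
        ← ENNReal.ofReal_add (Real.exp_pos _).le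
          (mul_nonneg (Real.exp_pos _).le (hr_nonneg u))]
      apply ENNReal.ofReal_le_ofReal
      rcases lt_trichotomy u a with h | h | h
      · have ht : hr u ≤ 1 := H1 u hu h
        have hpq : Real.exp (-(x * u)) ≤ Real.exp (-(x * a)) :=
          Real.exp_le_exp.2 (by nlinarith)
        nlinarith [hr_nonneg u, Real.exp_pos (-(x * u)), Real.exp_pos (-(x * a))]
      · rw [h]; nlinarith [Real.exp_pos (-(x * a))]
      · have ht : 1 ≤ hr u := H2 u hu h
        have hpq : Real.exp (-(x * a)) ≤ Real.exp (-(x * u)) :=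
          Real.exp_le_exp.2 (by nlinarith)
        nlinarith [hr_nonneg u, Real.exp_pos (-(x * u)), Real.exp_pos (-(x * a))]
    have hmain := lintegral_mono_ae hpoint
    rw [lintegral_add_right _ measurable_const, lintegral_const, measure_univ, mul_one,
      lintegral_add_right _ (hrmeas.const_mul _),
      lintegral_const_mul _ hrmeas, hint_hr, mul_one, ← hclaim1 x] at hmain
    exact (ENNReal.add_le_add_iff_right ENNReal.ofReal_ne_top).1 hmain
end

section
/- Let F, G : ℝ → (0,∞) be continuous strictly decreasing functions with F(x), G(x) → ∞ as x → −∞ and F(x), G(x) → 0 as x → ∞. Then G is steeper than F if and only if for every u > 0 and all x, y ∈ ℝ with G(x) = F(y), one has G(x + u) ≤ F(y + u). -/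
open Filter Set

/-- Generalized inverse `H⁻¹(a) = inf {x : H x ≤ a}` of a nonincreasing function, with
values in `[-∞,∞]` (`+∞` for the empty set, `-∞` for sets unbounded below). -/
noncomputable def einv (H : ℝ → ℝ) (a : ℝ) : EReal :=
  sInf (Real.toEReal '' {x : ℝ | H x ≤ a})

/-- `G` is steeper than `F`: for all `0 ≤ a ≤ b`,
`0 ≤ G⁻¹(a) - G⁻¹(b) ≤ F⁻¹(a) - F⁻¹(b)`.  The second inequality is stated in the
cross-added form `G⁻¹(a) + F⁻¹(b) ≤ F⁻¹(a) + G⁻¹(b)` to avoid `∞ - ∞`. -/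
def Steeper (F G : ℝ → ℝ) : Prop :=
  ∀ a b : ℝ, 0 ≤ a → a ≤ b →
    einv G b ≤ einv G a ∧ einv G a + einv F b ≤ einv F a + einv G b

private lemma exists_preimage (F : ℝ → ℝ) (hFc : Continuous F) (hFanti : StrictAnti F)
    (hFbot : Tendsto F atBot atTop) (hFtop : Tendsto F atTop (nhds 0))
    {a : ℝ} (ha : 0 < a) : ∃ x, F x = a := by
  obtain ⟨x₁, hx₁⟩ := (hFbot.eventually (eventually_ge_atTop a)).exists
  obtain ⟨x₂, hx₂⟩ := (hFtop.eventually_lt_const ha).exists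
  have hlt : x₁ < x₂ := (hFanti.lt_iff_gt).mp (lt_of_lt_of_le hx₂ hx₁)
  obtain ⟨x, -, hx⟩ := intermediate_value_Icc' hlt.le hFc.continuousOn ⟨hx₂.le, hx₁⟩
  exact ⟨x, hx⟩

private lemma einv_eq (F : ℝ → ℝ) (hFanti : StrictAnti F) {a x : ℝ} (hx : F x = a) :
    einv F a = (x : EReal) := by
  have hset : {y : ℝ | F y ≤ a} = Ici x := by
    ext y
    simp only [mem_setOf_eq, mem_Ici, ← hx, hFanti.le_iff_ge]
  rw [einv, hset]
  have hL : IsLeast (Real.toEReal '' Ici x) (x : EReal) := by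
    refine ⟨⟨x, le_refl x, rfl⟩, ?_⟩
    rintro z ⟨y, hy, rfl⟩
    exact_mod_cast hy
  exact hL.csInf_eq

private lemma einv_zero (F : ℝ → ℝ) (hFpos : ∀ x, 0 < F x) : einv F 0 = ⊤ := by
  have h : {x : ℝ | F x ≤ 0} = ∅ :=
    eq_empty_of_forall_notMem fun x hx => (hFpos x).not_ge hx
  rw [einv, h, image_empty, sInf_empty]

private lemma einv_ne_bot (F : ℝ → ℝ) (hFc : Continuous F) (hFanti : StrictAnti F)
    (hFpos : ∀ x, 0 < F x)
    (hFbot : Tendsto F atBot atTop) (hFtop : Tendsto F atTop (nhds 0))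
    {b : ℝ} (hb : 0 ≤ b) : einv F b ≠ ⊥ := by
  rcases hb.eq_or_lt with h | h
  · rw [← h, einv_zero F hFpos]; simp
  · obtain ⟨x, hx⟩ := exists_preimage F hFc hFanti hFbot hFtop h
    rw [einv_eq F hFanti hx]
    exact EReal.coe_ne_bot x

/-- For continuous strictly decreasing `F, G : ℝ → (0,∞)` with `F, G → ∞` at `-∞` and
`F, G → 0` at `+∞`, `G` is steeper than `F` iff whenever `G(x) = F(y)` and `u > 0` one has
`G(x+u) ≤ F(y+u)`. -/
theorem steeper_iff_level_propagation
    (F G : ℝ → ℝ)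
    (hFc : Continuous F) (hFanti : StrictAnti F) (hFpos : ∀ x, 0 < F x)
    (hFbot : Tendsto F atBot atTop) (hFtop : Tendsto F atTop (nhds 0))
    (hGc : Continuous G) (hGanti : StrictAnti G) (hGpos : ∀ x, 0 < G x)
    (hGbot : Tendsto G atBot atTop) (hGtop : Tendsto G atTop (nhds 0)) :
    Steeper F G ↔
      ∀ u : ℝ, 0 < u → ∀ x y : ℝ, G x = F y → G (x + u) ≤ F (y + u) := by
  constructor
  · -- Steeper → level propagation
    intro h u hu x y hxy
    set b : ℝ := G x with hb
    have hbpos : 0 < b := hGpos x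
    set a : ℝ := G (x + u) with ha
    have hapos : 0 < a := hGpos (x + u)
    have hab : a < b := hGanti (by linarith)
    obtain ⟨z, hz⟩ := exists_preimage F hFc hFanti hFbot hFtop hapos
    have h2 := (h a b hapos.le hab.le).2
    rw [einv_eq G hGanti ha.symm, einv_eq G hGanti hb.symm,
        einv_eq F hFanti hxy.symm, einv_eq F hFanti hz] at h2
    have h3 : x + u + y ≤ z + x := by exact_mod_cast h2
    have h4 : y + u ≤ z := by linarith
    calc G (x + u) = F z := hz.symm
      _ ≤ F (y + u) := hFanti.antitone h4
  · -- level propagation → Steeper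
    intro h a b ha hab
    rcases ha.eq_or_lt with h0 | hapos
    · -- a = 0 : everything is ⊤
      subst h0
      refine ⟨le_top.trans_eq (einv_zero G hGpos).symm, ?_⟩
      rw [einv_zero G hGpos, einv_zero F hFpos,
        EReal.top_add_of_ne_bot (einv_ne_bot F hFc hFanti hFpos hFbot hFtop (ha.trans hab)),
        EReal.top_add_of_ne_bot (einv_ne_bot G hGc hGanti hGpos hGbot hGtop (ha.trans hab))]
    · have hbpos : 0 < b := hapos.trans_le hab
      obtain ⟨fa, hfa⟩ := exists_preimage F hFc hFanti hFbot hFtop hapos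
      obtain ⟨fb, hfb⟩ := exists_preimage F hFc hFanti hFbot hFtop hbpos
      obtain ⟨ga, hga⟩ := exists_preimage G hGc hGanti hGbot hGtop hapos
      obtain ⟨gb, hgb⟩ := exists_preimage G hGc hGanti hGbot hGtop hbpos
      rw [einv_eq G hGanti hga, einv_eq G hGanti hgb,
          einv_eq F hFanti hfa, einv_eq F hFanti hfb]
      have hgba : gb ≤ ga := (hGanti.le_iff_ge).mp (by rw [hga, hgb]; exact hab)
      refine ⟨by exact_mod_cast hgba, ?_⟩
      rcases hab.eq_or_lt with rfl | hab'
      · have : ga = gb := hGanti.injective (by rw [hga, hgb])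
        have : fa = fb := hFanti.injective (by rw [hfa, hfb])
        simp_all [add_comm]
      · have hgba' : gb < ga := (hGanti.lt_iff_gt).mp (by rw [hga, hgb]; exact hab')
        have hu : 0 < ga - gb := by linarith
        have key := h (ga - gb) hu gb fb (by rw [hgb, hfb])
        have h5 : G ga ≤ F (fb + (ga - gb)) := by
          have : gb + (ga - gb) = ga := by ring
          rwa [this] at key
        have h6 : fb + (ga - gb) ≤ fa := by
          apply (hFanti.le_iff_ge).mp
          rw [hfa, ← hga]
          exact h5
        have : ga + fb ≤ fa + gb := by linarith
        exact_mod_cast this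
end

section
/- Let F, G : ℝ → (0,∞) be continuous strictly decreasing functions with F(x), G(x) → ∞ as x → −∞ and F(x), G(x) → 0 as x → ∞, and suppose G is steeper than F. Then for every u > 0, ∫_ℝ e^{−(G(x−u) − G(x))} dμ_G(x) ≤ ∫_ℝ e^{−(F(x−u) − F(x))} dμ_F(x). -/
open MeasureTheory Filter Set
open scoped ENNReal

/-- If `F c = a` and `F` is strictly antitone, then `einv F a = c`. -/
lemma einv_eq_of_strictAnti {F : ℝ → ℝ} (hanti : StrictAnti F) {a c : ℝ} (hc : F c = a) :
    einv F a = (c : EReal) := by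
  unfold einv
  apply le_antisymm
  · exact sInf_le ⟨c, by simp [hc], rfl⟩
  · refine le_sInf ?_
    rintro _ ⟨x, hx, rfl⟩
    have : F x ≤ F c := by simpa [hc] using hx
    exact_mod_cast hanti.le_iff_ge.mp this

/-- Surjectivity onto positive reals. -/
lemma exists_eq_of_tendsto {F : ℝ → ℝ} (hFc : Continuous F)
    (hFbot : Tendsto F atBot atTop) (hFtop : Tendsto F atTop (nhds 0))
    {a : ℝ} (ha : 0 < a) : ∃ x, F x = a := by
  obtain ⟨y, hy⟩ : ∃ y, a ≤ F y := by
    have := hFbot.eventually (eventually_ge_atTop a)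
    rcases this.exists with ⟨y, hy⟩
    exact ⟨y, hy⟩
  obtain ⟨z, hz⟩ : ∃ z, F z ≤ a := by
    have : ∀ᶠ x in atTop, F x < a := hFtop.eventually (eventually_lt_nhds ha)
    rcases this.exists with ⟨z, hz⟩
    exact ⟨z, hz.le⟩
  rcases le_total y z with h | h
  · have := intermediate_value_Icc' h hFc.continuousOn (by exact ⟨hz, hy⟩ : a ∈ Icc (F z) (F y))
    rcases this with ⟨x, _, hx⟩
    exact ⟨x, hx⟩
  · have := intermediate_value_Icc h hFc.continuousOn (by exact ⟨hz, hy⟩ : a ∈ Icc (F z) (F y))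
    rcases this with ⟨x, _, hx⟩
    exact ⟨x, hx⟩

/-- Let `F, G : ℝ → (0,∞)` be continuous strictly decreasing with `F, G → ∞` at `-∞` and
`F, G → 0` at `+∞`, with `G` steeper than `F`, and let `μ_F`, `μ_G` be the
Lebesgue–Stieltjes measures of `e^{-F}`, `e^{-G}`. Then for every `u > 0`,
`∫ e^{-(G(x-u) - G(x))} dμ_G(x) ≤ ∫ e^{-(F(x-u) - F(x))} dμ_F(x)`. -/
theorem steeper_gap_integral_mono
    (F G : ℝ → ℝ)
    (hFc : Continuous F) (hFanti : StrictAnti F) (hFpos : ∀ x, 0 < F x)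
    (hFbot : Tendsto F atBot atTop) (hFtop : Tendsto F atTop (nhds 0))
    (hGc : Continuous G) (hGanti : StrictAnti G) (hGpos : ∀ x, 0 < G x)
    (hGbot : Tendsto G atBot atTop) (hGtop : Tendsto G atTop (nhds 0))
    (hsteep : Steeper F G)
    (sF sG : StieltjesFunction ℝ)
    (hsF : ∀ x, sF x = Real.exp (-F x)) (hsG : ∀ x, sG x = Real.exp (-G x)) :
    ∀ u : ℝ, 0 < u →
      (∫⁻ x, ENNReal.ofReal (Real.exp (-(G (x - u) - G x))) ∂sG.measure)
        ≤ ∫⁻ x, ENNReal.ofReal (Real.exp (-(F (x - u) - F x))) ∂sF.measure := by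
  intro u hu
  -- inverse functions
  obtain ⟨finv, hfinv⟩ : ∃ f : ℝ → ℝ, ∀ a, 0 < a → F (f a) = a := by
    refine ⟨fun a => if h : 0 < a then (exists_eq_of_tendsto hFc hFbot hFtop h).choose else 0,
      fun a h => ?_⟩
    simp only [dif_pos h]
    exact (exists_eq_of_tendsto hFc hFbot hFtop h).choose_spec
  obtain ⟨ginv, hginv⟩ : ∃ g : ℝ → ℝ, ∀ a, 0 < a → G (g a) = a := by
    refine ⟨fun a => if h : 0 < a then (exists_eq_of_tendsto hGc hGbot hGtop h).choose else 0,
      fun a h => ?_⟩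
    simp only [dif_pos h]
    exact (exists_eq_of_tendsto hGc hGbot hGtop h).choose_spec
  -- Real form of the steeper hypothesis
  have hsteepR : ∀ a b : ℝ, 0 < a → a ≤ b → ginv a + finv b ≤ finv a + ginv b := by
    intro a b ha hab
    have hb : 0 < b := ha.trans_le hab
    have h := (hsteep a b ha.le hab).2
    rw [einv_eq_of_strictAnti hGanti (hginv a ha), einv_eq_of_strictAnti hFanti (hfinv b hb),
      einv_eq_of_strictAnti hFanti (hfinv a ha), einv_eq_of_strictAnti hGanti (hginv b hb)] at h
    exact_mod_cast h
  set T : ℝ → ℝ := fun x => ginv (F x) with hT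
  set S : ℝ → ℝ := fun x => finv (G x) with hS
  have hGT : ∀ x, G (T x) = F x := fun x => hginv _ (hFpos x)
  have hFS : ∀ x, F (S x) = G x := fun x => hfinv _ (hGpos x)
  have hTS : ∀ x, T (S x) = x := by
    intro x
    have : G (T (S x)) = G x := by rw [hGT, hFS]
    exact hGanti.injective this
  have hST : ∀ x, S (T x) = x := by
    intro x
    have : F (S (T x)) = F x := by rw [hFS, hGT]
    exact hFanti.injective this
  have hTmono : StrictMono T := by
    intro x y hxy
    have h1 : F y < F x := hFanti hxy
    have h2 : G (T y) < G (T x) := by rw [hGT, hGT]; exact h1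
    exact hGanti.lt_iff_gt.mp h2
  have hTmeas : Measurable T := hTmono.monotone.measurable
  -- the key inequality : T x - u ≤ T (x - u)
  have hkey : ∀ x : ℝ, T x - u ≤ T (x - u) := by
    intro x
    have hab : F x ≤ F (x - u) := (hFanti (by linarith)).le
    have h := hsteepR (F x) (F (x - u)) (hFpos x) hab
    -- finv (F x) = x, finv (F (x-u)) = x - u
    have hx : finv (F x) = x := hFanti.injective (hfinv _ (hFpos x))
    have hxu : finv (F (x - u)) = x - u := hFanti.injective (hfinv _ (hFpos (x - u)))
    rw [hx, hxu] at h
    have : T x + (x - u) ≤ x + T (x - u) := h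
    linarith
  -- sG.measure is the pushforward of sF.measure under T
  have hmap : sG.measure = Measure.map T sF.measure := by
    refine Measure.ext_of_Ioc _ _ fun a b hab => ?_
    rw [Measure.map_apply hTmeas measurableSet_Ioc]
    have hpre : T ⁻¹' Ioc a b = Ioc (S a) (S b) := by
      ext x
      simp only [mem_preimage, mem_Ioc]
      constructor
      · rintro ⟨h1, h2⟩
        have h1' : T (S a) < T x := by rw [hTS]; exact h1
        have h2' : T x ≤ T (S b) := by rw [hTS]; exact h2
        exact ⟨hTmono.lt_iff_lt.mp h1', hTmono.le_iff_le.mp h2'⟩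
      · rintro ⟨h1, h2⟩
        constructor
        · have := hTmono h1; rw [hTS] at this; exact this
        · have := hTmono.monotone h2; rw [hTS] at this; exact this
    rw [hpre, sG.measure_Ioc, sF.measure_Ioc, hsG, hsG, hsF, hsF, hFS, hFS]
  rw [hmap, lintegral_map (by fun_prop) hTmeas]
  refine lintegral_mono fun x => ?_
  apply ENNReal.ofReal_le_ofReal
  apply Real.exp_le_exp.mpr
  have h1 : F (x - u) ≤ G (T x - u) := by
    have := hGanti.antitone (hkey x)
    rw [hGT] at this
    exact this
  rw [hGT]
  linarith
end

section
/- Let F, G : ℝ → [0,∞] be continuous nonincreasing functions with F(x), G(x) → ∞ as x → −∞ and F(x), G(x) → 0 as x → ∞, such that G is steeper than F. Then for any continuous function Ψ : [0,∞) → [0,∞) with Ψ(0) = 0 and Ψ(t) → 0 as t → ∞, one has ∫_ℝ Ψ(G(t)) dt ≤ ∫_ℝ Ψ(F(t)) dt (as an inequality in [0,∞]). -/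
open MeasureTheory Filter Set
open scoped ENNReal

noncomputable def rinv (H : ℝ → ℝ≥0∞) (a : ℝ) : ℝ :=
  sInf {x : ℝ | H x ≤ ENNReal.ofReal a}

section aux

variable {H : ℝ → ℝ≥0∞} (hc : Continuous H) (hanti : Antitone H)
  (hbot : Tendsto H atBot (nhds ⊤)) (htop : Tendsto H atTop (nhds 0))

include hc hanti hbot htop
set_option linter.unusedSectionVars false

theorem rinv_nonempty (a : ℝ) (ha : 0 < a) :
    {x : ℝ | H x ≤ ENNReal.ofReal a}.Nonempty := by
  have hv : (0 : ℝ≥0∞) < ENNReal.ofReal a := ENNReal.ofReal_pos.mpr ha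
  have : ∀ᶠ x in atTop, H x ∈ Iio (ENNReal.ofReal a) :=
    htop.eventually (Iio_mem_nhds hv)
  rcases this.exists with ⟨x, hx⟩
  exact ⟨x, show H x ≤ ENNReal.ofReal a from le_of_lt hx⟩

theorem rinv_bddBelow (a : ℝ) :
    BddBelow {x : ℝ | H x ≤ ENNReal.ofReal a} := by
  have hv : ENNReal.ofReal a < ⊤ := ENNReal.ofReal_lt_top
  have : ∀ᶠ x in atBot, H x ∈ Ioi (ENNReal.ofReal a) :=
    hbot.eventually (Ioi_mem_nhds hv)
  rcases (eventually_atBot.mp this) with ⟨m, hm⟩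
  refine ⟨m, fun x hx => ?_⟩
  by_contra h
  push_neg at h
  exact absurd (show H x ≤ ENNReal.ofReal a from hx) (not_le.mpr (hm x h.le))

theorem setOf_le_eq_Ici (a : ℝ) (ha : 0 < a) :
    {x : ℝ | H x ≤ ENNReal.ofReal a} = Ici (rinv H a) := by
  set S := {x : ℝ | H x ≤ ENNReal.ofReal a} with hS
  have hne : S.Nonempty := rinv_nonempty hc hanti hbot htop a ha
  have hbd : BddBelow S := rinv_bddBelow hc hanti hbot htop a
  have hcl : IsClosed S := IsClosed.preimage hc isClosed_Iic
  have hmem : sInf S ∈ S := hcl.csInf_mem hne hbd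
  ext y
  constructor
  · exact fun hy => csInf_le hbd hy
  · intro hy
    exact le_trans (hanti hy) hmem

theorem mem_rinv_iff (a : ℝ) (ha : 0 < a) (x : ℝ) :
    H x ≤ ENNReal.ofReal a ↔ rinv H a ≤ x := by
  have := setOf_le_eq_Ici hc hanti hbot htop a ha
  constructor
  · intro h; have : x ∈ Ici (rinv H a) := this ▸ h; exact this
  · intro h; have : x ∈ {x : ℝ | H x ≤ ENNReal.ofReal a} := this ▸ (mem_Ici.mpr h)
    exact this

theorem rinv_antitone {a b : ℝ} (ha : 0 < a) (hab : a ≤ b) :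
    rinv H b ≤ rinv H a := by
  refine csInf_le_csInf (rinv_bddBelow hc hanti hbot htop b) (rinv_nonempty hc hanti hbot htop a ha) ?_
  intro x hx
  exact le_trans hx (ENNReal.ofReal_le_ofReal hab)

theorem rinv_right_cont {a : ℝ} (ha : 0 < a) {δ : ℝ} (hδ : 0 < δ) :
    ∃ b, a < b ∧ rinv H a - δ < rinv H b := by
  by_contra h
  push_neg at h
  set x₀ := rinv H a - δ with hx₀
  have hx : ∀ b, a < b → H x₀ ≤ ENNReal.ofReal b := by
    intro b hb
    exact (mem_rinv_iff hc hanti hbot htop b (lt_trans ha hb) x₀).mpr (h b hb)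
  have hlim : Tendsto (fun n : ℕ => ENNReal.ofReal (a + 1 / ((n : ℝ) + 1))) atTop
      (nhds (ENNReal.ofReal a)) := by
    have h1 : Tendsto (fun n : ℕ => a + 1 / ((n : ℝ) + 1)) atTop (nhds (a + 0)) :=
      tendsto_const_nhds.add tendsto_one_div_add_atTop_nhds_zero_nat
    rw [add_zero] at h1
    exact (ENNReal.continuous_ofReal.tendsto a).comp h1
  have hle : H x₀ ≤ ENNReal.ofReal a := by
    refine ge_of_tendsto' hlim fun n => hx _ ?_
    have : (0:ℝ) < 1 / ((n : ℝ) + 1) := by positivity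
    linarith
  have : rinv H a ≤ x₀ := (mem_rinv_iff hc hanti hbot htop a ha x₀).mp hle
  linarith

theorem einvT_eq_rinv (a : ℝ) (ha : 0 < a) :
    einvT H (ENNReal.ofReal a) = ((rinv H a : ℝ) : EReal) := by
  unfold einvT
  rw [setOf_le_eq_Ici hc hanti hbot htop a ha]
  apply le_antisymm
  · exact sInf_le ⟨rinv H a, self_mem_Ici, rfl⟩
  · refine le_sInf ?_
    rintro y ⟨x, hx, rfl⟩
    exact EReal.coe_le_coe_iff.mpr hx

theorem map_Ioc_eq {c d : ℝ} (hc0 : 0 < c) (hcd : c ≤ d) :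
    (fun t => (H t).toReal) ⁻¹' (Ioc c d) = Ico (rinv H d) (rinv H c) := by
  ext t
  simp only [mem_preimage, mem_Ioc, mem_Ico]
  constructor
  · rintro ⟨h1, h2⟩
    have hne : H t ≠ ⊤ := by
      intro htop'
      rw [htop'] at h1
      simp at h1
      linarith
    have hd : H t ≤ ENNReal.ofReal d :=
      (ENNReal.le_ofReal_iff_toReal_le hne (le_trans hc0.le (le_trans h1.le h2))).mpr h2
    have hcl : ENNReal.ofReal c < H t :=
      (ENNReal.ofReal_lt_iff_lt_toReal hc0.le hne).mpr h1
    refine ⟨(mem_rinv_iff hc hanti hbot htop d (lt_of_lt_of_le hc0 hcd) t).mp hd, ?_⟩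
    by_contra hge
    push_neg at hge
    have := (mem_rinv_iff hc hanti hbot htop c hc0 t).mpr hge
    exact absurd this (not_le.mpr hcl)
  · rintro ⟨h1, h2⟩
    have hd : H t ≤ ENNReal.ofReal d :=
      (mem_rinv_iff hc hanti hbot htop d (lt_of_lt_of_le hc0 hcd) t).mpr h1
    have hne : H t ≠ ⊤ := (lt_of_le_of_lt hd ENNReal.ofReal_lt_top).ne
    have hcl : ENNReal.ofReal c < H t := by
      by_contra hle
      push_neg at hle
      have := (mem_rinv_iff hc hanti hbot htop c hc0 t).mp hle
      linarith
    exact ⟨(ENNReal.ofReal_lt_iff_lt_toReal hc0.le hne).mp hcl,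
      (ENNReal.le_ofReal_iff_toReal_le hne (le_trans hc0.le hcd)).mp hd⟩

theorem map_measure_Ioc {c d : ℝ} (hc0 : 0 < c) (hcd : c ≤ d) :
    Measure.map (fun t => (H t).toReal) volume (Ioc c d)
      = ENNReal.ofReal (rinv H c - rinv H d) := by
  rw [Measure.map_apply hc.measurable.ennreal_toReal measurableSet_Ioc]
  rw [map_Ioc_eq hc hanti hbot htop hc0 hcd, Real.volume_Ico]

theorem rinv_clamp_mono {ε M : ℝ} (hε : 0 < ε) (hεM : ε ≤ M) :
    Monotone (fun x => -(rinv H (max ε (min x M)))) := by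
  intro x y hxy
  simp only [neg_le_neg_iff]
  exact rinv_antitone hc hanti hbot htop (lt_of_lt_of_le hε (le_max_left _ _))
    (max_le_max le_rfl (min_le_min_right M hxy))

theorem rinv_clamp_rightCont {ε M : ℝ} (hε : 0 < ε) (hεM : ε ≤ M) (x : ℝ) :
    ContinuousWithinAt (fun y => -(rinv H (max ε (min y M)))) (Ici x) x := by
  rcases lt_or_ge x ε with hx | hx
  · rw [Metric.continuousWithinAt_iff]
    intro δ' hδ'
    refine ⟨ε - x, by linarith, fun y hy hdy => ?_⟩
    rw [mem_Ici] at hy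
    rw [Real.dist_eq, abs_lt] at hdy
    have hyε : y ≤ ε := by linarith [hdy.2]
    have h1 : max ε (min y M) = ε := max_eq_left (le_trans (min_le_left _ _) hyε)
    have h2 : max ε (min x M) = ε := max_eq_left (le_trans (min_le_left _ _) hx.le)
    rw [h1, h2]
    simpa using hδ'
  rcases le_or_gt M x with hx2 | hx2
  · rw [Metric.continuousWithinAt_iff]
    intro δ' hδ'
    refine ⟨1, one_pos, fun y hy hdy => ?_⟩
    rw [mem_Ici] at hy
    have h1 : max ε (min y M) = M := by
      rw [min_eq_right (le_trans hx2 hy), max_eq_right hεM]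
    have h2 : max ε (min x M) = M := by
      rw [min_eq_right hx2, max_eq_right hεM]
    rw [h1, h2]
    simpa using hδ'
  · have hx0 : 0 < x := lt_of_lt_of_le hε hx
    rw [Metric.continuousWithinAt_iff]
    intro δ' hδ'
    obtain ⟨b, hb1, hb2⟩ := rinv_right_cont hc hanti hbot htop hx0 hδ'
    set b' := min b M with hb'
    have hxb' : x < b' := lt_min hb1 hx2
    have hbb' : rinv H b ≤ rinv H b' :=
      rinv_antitone hc hanti hbot htop (lt_trans hx0 hxb') (min_le_left _ _)
    refine ⟨b' - x, by linarith, fun y hy hdy => ?_⟩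
    rw [mem_Ici] at hy
    rw [Real.dist_eq, abs_lt] at hdy
    have hyb' : y < b' := by linarith [hdy.2]
    have hyM : y ≤ M := le_trans hyb'.le (min_le_right _ _)
    have h1 : max ε (min y M) = y := by
      rw [min_eq_left hyM, max_eq_right (le_trans hx hy)]
    have h2 : max ε (min x M) = x := by
      rw [min_eq_left (le_trans hx2.le le_rfl), max_eq_right hx]
    rw [h1, h2]
    have hy0 : 0 < y := lt_of_lt_of_le hx0 hy
    have r1 : rinv H y ≤ rinv H x := rinv_antitone hc hanti hbot htop hx0 hy
    have r2 : rinv H b' ≤ rinv H y := rinv_antitone hc hanti hbot htop hy0 hyb'.le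
    rw [Real.dist_eq, abs_lt]
    constructor <;> linarith

end aux

section key

variable {F G : ℝ → ℝ≥0∞}
  (hFc : Continuous F) (hFanti : Antitone F)
  (hFbot : Tendsto F atBot (nhds ⊤)) (hFtop : Tendsto F atTop (nhds 0))
  (hGc : Continuous G) (hGanti : Antitone G)
  (hGbot : Tendsto G atBot (nhds ⊤)) (hGtop : Tendsto G atTop (nhds 0))
  (hsteep : SteeperT F G)

set_option linter.unusedSectionVars false

include hFc hFanti hFbot hFtop hGc hGanti hGbot hGtop hsteep in
theorem steep_rinv {a b : ℝ} (ha : 0 < a) (hab : a ≤ b) :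
    rinv G a + rinv F b ≤ rinv F a + rinv G b := by
  have h := (hsteep (ENNReal.ofReal a) (ENNReal.ofReal b) (ENNReal.ofReal_le_ofReal hab)).2
  have hb : 0 < b := lt_of_lt_of_le ha hab
  rw [einvT_eq_rinv hGc hGanti hGbot hGtop a ha, einvT_eq_rinv hFc hFanti hFbot hFtop b hb,
    einvT_eq_rinv hFc hFanti hFbot hFtop a ha, einvT_eq_rinv hGc hGanti hGbot hGtop b hb,
    ← EReal.coe_add, ← EReal.coe_add, EReal.coe_le_coe_iff] at h
  exact h

/-- Stieltjes function attached to a clamped generalized inverse. -/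
noncomputable def clampSt (H : ℝ → ℝ≥0∞) (hc : Continuous H) (hanti : Antitone H)
    (hbot : Tendsto H atBot (nhds ⊤)) (htop : Tendsto H atTop (nhds 0))
    {ε M : ℝ} (hε : 0 < ε) (hεM : ε ≤ M) : StieltjesFunction ℝ :=
  ⟨fun x => -(rinv H (max ε (min x M))), rinv_clamp_mono hc hanti hbot htop hε hεM,
    rinv_clamp_rightCont hc hanti hbot htop hε hεM⟩

@[simp] theorem clampSt_apply (H : ℝ → ℝ≥0∞) (hc : Continuous H) (hanti : Antitone H)
    (hbot : Tendsto H atBot (nhds ⊤)) (htop : Tendsto H atTop (nhds 0))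
    {ε M : ℝ} (hε : 0 < ε) (hεM : ε ≤ M) (x : ℝ) :
    clampSt H hc hanti hbot htop hε hεM x = -(rinv H (max ε (min x M))) := rfl

include hFc hFanti hFbot hFtop hGc hGanti hGbot hGtop hsteep in
theorem key_restrict {ε M : ℝ} (hε : 0 < ε) (hεM : ε ≤ M) :
    (Measure.map (fun t => (G t).toReal) volume).restrict (Ioc ε M)
      ≤ (Measure.map (fun t => (F t).toReal) volume).restrict (Ioc ε M) := by
  set νG := Measure.map (fun t => (G t).toReal) volume with hνG
  set νF := Measure.map (fun t => (F t).toReal) volume with hνF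
  set sG := clampSt G hGc hGanti hGbot hGtop hε hεM with hsG
  set sF := clampSt F hFc hFanti hFbot hFtop hε hεM with hsF
  have clamp_mem : ∀ x : ℝ, 0 < max ε (min x M) ∧ max ε (min x M) ≤ M := by
    intro x
    exact ⟨lt_of_lt_of_le hε (le_max_left _ _), max_le hεM (min_le_right _ _)⟩
  have clamp_mono : Monotone fun x : ℝ => max ε (min x M) := fun x y hxy =>
    max_le_max le_rfl (min_le_min_right M hxy)
  -- the difference Stieltjes function
  have sD_mono : Monotone (fun x => rinv G (max ε (min x M)) - rinv F (max ε (min x M))) := by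
    intro x y hxy
    have h := steep_rinv hFc hFanti hFbot hFtop hGc hGanti hGbot hGtop hsteep
      (clamp_mem x).1 (clamp_mono hxy)
    simp only []
    linarith
  have sD_rc : ∀ x, ContinuousWithinAt
      (fun x => rinv G (max ε (min x M)) - rinv F (max ε (min x M))) (Ici x) x := by
    intro x
    have h := (rinv_clamp_rightCont hFc hFanti hFbot hFtop hε hεM x).sub
      (rinv_clamp_rightCont hGc hGanti hGbot hGtop hε hεM x)
    have : (fun y => -(rinv F (max ε (min y M))) - -(rinv G (max ε (min y M))))
        = fun y => rinv G (max ε (min y M)) - rinv F (max ε (min y M)) := by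
      funext y; ring
    rw [← this]; exact h
  set sD : StieltjesFunction ℝ := ⟨_, sD_mono, sD_rc⟩ with hsD
  -- measure computations
  have hclamp_eq : ∀ x : ℝ, ε ≤ x → x ≤ M → max ε (min x M) = x := by
    intro x h1 h2
    rw [min_eq_left h2, max_eq_right h1]
  have hGIoc : ∀ a b : ℝ, a < b →
      νG.restrict (Ioc ε M) (Ioc a b) = ENNReal.ofReal (sG (b ⊓ M) - sG (a ⊔ ε)) := by
    intro a b _
    rw [Measure.restrict_apply measurableSet_Ioc, Ioc_inter_Ioc]
    rcases lt_or_ge (a ⊔ ε) (b ⊓ M) with hlt | hle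
    · have hc0 : 0 < a ⊔ ε := lt_of_lt_of_le hε (le_max_right _ _)
      rw [hνG, map_measure_Ioc hGc hGanti hGbot hGtop hc0 hlt.le]
      have e1 : max ε (min (a ⊔ ε) M) = a ⊔ ε :=
        hclamp_eq _ (le_max_right _ _) (le_trans hlt.le (min_le_right _ _))
      have e2 : max ε (min (b ⊓ M) M) = b ⊓ M :=
        hclamp_eq _ (le_trans (le_max_right _ _) hlt.le) (min_le_right _ _)
      rw [hsG]
      simp only [clampSt_apply, e1, e2]
      ring_nf
    · rw [Ioc_eq_empty (not_lt.mpr hle), measure_empty]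
      have : sG (b ⊓ M) ≤ sG (a ⊔ ε) := sG.mono hle
      rw [ENNReal.ofReal_eq_zero.mpr (by linarith)]
  have hFIoc : ∀ a b : ℝ, a < b →
      νF.restrict (Ioc ε M) (Ioc a b) = ENNReal.ofReal (sF (b ⊓ M) - sF (a ⊔ ε)) := by
    intro a b _
    rw [Measure.restrict_apply measurableSet_Ioc, Ioc_inter_Ioc]
    rcases lt_or_ge (a ⊔ ε) (b ⊓ M) with hlt | hle
    · have hc0 : 0 < a ⊔ ε := lt_of_lt_of_le hε (le_max_right _ _)
      rw [hνF, map_measure_Ioc hFc hFanti hFbot hFtop hc0 hlt.le]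
      have e1 : max ε (min (a ⊔ ε) M) = a ⊔ ε :=
        hclamp_eq _ (le_max_right _ _) (le_trans hlt.le (min_le_right _ _))
      have e2 : max ε (min (b ⊓ M) M) = b ⊓ M :=
        hclamp_eq _ (le_trans (le_max_right _ _) hlt.le) (min_le_right _ _)
      rw [hsF]
      simp only [clampSt_apply, e1, e2]
      ring_nf
    · rw [Ioc_eq_empty (not_lt.mpr hle), measure_empty]
      have : sF (b ⊓ M) ≤ sF (a ⊔ ε) := sF.mono hle
      rw [ENNReal.ofReal_eq_zero.mpr (by linarith)]
  -- identification with the Stieltjes measures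
  have hGid : νG.restrict (Ioc ε M) = sG.measure.restrict (Ioc ε M) := by
    refine Measure.ext_of_Ioc' _ _ (fun a b hab => ?_) (fun a b hab => ?_)
    · rw [hGIoc a b hab]; exact ENNReal.ofReal_ne_top
    · rw [hGIoc a b hab, Measure.restrict_apply measurableSet_Ioc, Ioc_inter_Ioc,
        StieltjesFunction.measure_Ioc]
  have hFid : νF.restrict (Ioc ε M) = sF.measure.restrict (Ioc ε M) := by
    refine Measure.ext_of_Ioc' _ _ (fun a b hab => ?_) (fun a b hab => ?_)
    · rw [hFIoc a b hab]; exact ENNReal.ofReal_ne_top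
    · rw [hFIoc a b hab, Measure.restrict_apply measurableSet_Ioc, Ioc_inter_Ioc,
        StieltjesFunction.measure_Ioc]
  -- sF.measure = sG.measure + sD.measure
  have hsum : sF.measure = sG.measure + sD.measure := by
    refine Measure.ext_of_Ioc' _ _ (fun a b hab => ?_) (fun a b hab => ?_)
    · rw [StieltjesFunction.measure_Ioc]; exact ENNReal.ofReal_ne_top
    · rw [Measure.add_apply, StieltjesFunction.measure_Ioc, StieltjesFunction.measure_Ioc,
        StieltjesFunction.measure_Ioc,
        ← ENNReal.ofReal_add (sub_nonneg.mpr (sG.mono hab.le)) (sub_nonneg.mpr (sD.mono hab.le))]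
      congr 1
      show -(rinv F (max ε (min b M))) - -(rinv F (max ε (min a M)))
        = (-(rinv G (max ε (min b M))) - -(rinv G (max ε (min a M))))
          + ((rinv G (max ε (min b M)) - rinv F (max ε (min b M)))
            - (rinv G (max ε (min a M)) - rinv F (max ε (min a M))))
      ring
  calc νG.restrict (Ioc ε M) = sG.measure.restrict (Ioc ε M) := hGid
    _ ≤ (sG.measure + sD.measure).restrict (Ioc ε M) :=
        Measure.restrict_mono (subset_refl _) (Measure.le_add_right le_rfl)
    _ = sF.measure.restrict (Ioc ε M) := by rw [hsum]
    _ = νF.restrict (Ioc ε M) := hFid.symm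

end key

/-- Let `F, G : ℝ → [0,∞]` be continuous nonincreasing with `F, G → ∞` at `-∞` and
`F, G → 0` at `+∞`, with `G` steeper than `F`.  Then for any continuous
`Ψ : [0,∞) → [0,∞)` vanishing at `0` and at `∞` (so that `Ψ` extends by `0` to `t = ∞`,
which is realized below via `ENNReal.toReal`),
`∫_ℝ Ψ(G(t)) dt ≤ ∫_ℝ Ψ(F(t)) dt` as an inequality in `[0,∞]`. -/
theorem steeper_layercake_mono
    (F G : ℝ → ℝ≥0∞)
    (hFc : Continuous F) (hFanti : Antitone F)
    (hFbot : Tendsto F atBot (nhds ⊤)) (hFtop : Tendsto F atTop (nhds 0))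
    (hGc : Continuous G) (hGanti : Antitone G)
    (hGbot : Tendsto G atBot (nhds ⊤)) (hGtop : Tendsto G atTop (nhds 0))
    (hsteep : SteeperT F G)
    (Ψ : ℝ → ℝ)
    (hΨc : ContinuousOn Ψ (Set.Ici 0)) (hΨ_nonneg : ∀ t, 0 ≤ t → 0 ≤ Ψ t)
    (hΨ0 : Ψ 0 = 0) (hΨtop : Tendsto Ψ atTop (nhds 0)) :
    (∫⁻ t : ℝ, ENNReal.ofReal (Ψ (G t).toReal))
      ≤ ∫⁻ t : ℝ, ENNReal.ofReal (Ψ (F t).toReal) := by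
  set Φ : ℝ → ℝ := fun x => Ψ (max x 0) with hΦ
  have hΦc : Continuous Φ :=
    hΨc.comp_continuous (continuous_id.max continuous_const)
      (fun x => mem_Ici.mpr (le_max_right x 0))
  set h : ℝ → ℝ≥0∞ := fun x => ENNReal.ofReal (Φ x) with hh_def
  have hh : Measurable h := ENNReal.measurable_ofReal.comp hΦc.measurable
  have hgG : Measurable fun t => (G t).toReal := hGc.measurable.ennreal_toReal
  have hgF : Measurable fun t => (F t).toReal := hFc.measurable.ennreal_toReal
  set νG := Measure.map (fun t => (G t).toReal) volume with hνG
  set νF := Measure.map (fun t => (F t).toReal) volume with hνF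
  have hintG : (∫⁻ t : ℝ, ENNReal.ofReal (Ψ (G t).toReal)) = ∫⁻ x, h x ∂νG := by
    rw [hνG, lintegral_map hh hgG]
    refine lintegral_congr fun t => ?_
    rw [hh_def]
    simp only [hΦ, max_eq_left ENNReal.toReal_nonneg]
  have hintF : (∫⁻ t : ℝ, ENNReal.ofReal (Ψ (F t).toReal)) = ∫⁻ x, h x ∂νF := by
    rw [hνF, lintegral_map hh hgF]
    refine lintegral_congr fun t => ?_
    rw [hh_def]
    simp only [hΦ, max_eq_left ENNReal.toReal_nonneg]
  have hzero : ∀ x : ℝ, x ≤ 0 → h x = 0 := by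
    intro x hx
    rw [hh_def]
    simp only [hΦ, max_eq_right hx, hΨ0, ENNReal.ofReal_zero]
  set s : ℕ → Set ℝ := fun n => Ioc (((n : ℝ) + 1)⁻¹) ((n : ℝ) + 1) with hs
  have hspos : ∀ n : ℕ, (0:ℝ) < ((n : ℝ) + 1)⁻¹ := by
    intro n; positivity
  have hsle : ∀ n : ℕ, ((n : ℝ) + 1)⁻¹ ≤ (n : ℝ) + 1 := by
    intro n
    have h1 : (1:ℝ) ≤ (n : ℝ) + 1 := by
      have := Nat.cast_nonneg (α := ℝ) n
      linarith
    calc ((n : ℝ) + 1)⁻¹ ≤ 1 := by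
          rw [inv_le_one_iff₀]; right; exact h1
      _ ≤ (n : ℝ) + 1 := h1
  have hmono : Monotone fun n : ℕ => (s n).indicator h := by
    intro i j hij
    refine Set.indicator_le_indicator_of_subset ?_ (fun x => zero_le)
    refine Ioc_subset_Ioc ?_ ?_
    · have hij' : (i : ℝ) + 1 ≤ (j : ℝ) + 1 := by
        have : (i:ℝ) ≤ j := by exact_mod_cast hij
        linarith
      exact inv_anti₀ (by positivity) hij'
    · have : (i:ℝ) ≤ j := by exact_mod_cast hij
      linarith
  have hsup : ∀ x : ℝ, h x = ⨆ n, (s n).indicator h x := by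
    intro x
    apply le_antisymm
    · rcases le_or_gt x 0 with hx | hx
      · rw [hzero x hx]; exact zero_le
      · obtain ⟨n, hn⟩ := exists_nat_gt (max x⁻¹ x)
        have hx1 : x ≤ (n : ℝ) + 1 := by
          have := le_max_right x⁻¹ x
          linarith
        have hx2 : ((n : ℝ) + 1)⁻¹ < x := by
          have h1 : x⁻¹ < (n : ℝ) + 1 := by
            have := le_max_left x⁻¹ x
            linarith
          have h2 : (0:ℝ) < (n:ℝ) + 1 := by positivity
          calc ((n : ℝ) + 1)⁻¹ < x⁻¹⁻¹ := by
                apply inv_strictAnti₀ (by positivity) h1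
            _ = x := inv_inv x
        have hmem : x ∈ s n := ⟨hx2, hx1⟩
        calc h x = (s n).indicator h x := (Set.indicator_of_mem hmem h).symm
          _ ≤ ⨆ n, (s n).indicator h x := le_iSup (fun n => (s n).indicator h x) n
    · exact iSup_le fun n => Set.indicator_le_self _ _ x
  rw [hintG, hintF]
  calc ∫⁻ x, h x ∂νG = ∫⁻ x, ⨆ n, (s n).indicator h x ∂νG := lintegral_congr hsup
    _ = ⨆ n, ∫⁻ x, (s n).indicator h x ∂νG :=
        lintegral_iSup (fun n => hh.indicator measurableSet_Ioc) hmono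
    _ ≤ ⨆ n, ∫⁻ x, (s n).indicator h x ∂νF := by
        refine iSup_mono fun n => ?_
        rw [lintegral_indicator measurableSet_Ioc, lintegral_indicator measurableSet_Ioc]
        exact lintegral_mono' (key_restrict hFc hFanti hFbot hFtop hGc hGanti hGbot hGtop hsteep
          (hspos n) (hsle n)) le_rfl
    _ = ∫⁻ x, ⨆ n, (s n).indicator h x ∂νF :=
        (lintegral_iSup (fun n => hh.indicator measurableSet_Ioc) hmono).symm
    _ = ∫⁻ x, h x ∂νF := lintegral_congr fun x => (hsup x).symm
end

section
/- Let F, G : ℝ → [0,∞] be continuous nonincreasing functions with F(x), G(x) → ∞ as x → −∞ and F(x), G(x) → 0 as x → ∞, such that G is steeper than F, and let Ψ : [0,∞) → [0,∞) be continuous with Ψ(0) = 0, Ψ(t) → 0 as t → ∞, and Ψ(t) > 0 for every t ∈ (0,∞). If ∫_ℝ Ψ(G(t)) dt = ∫_ℝ Ψ(F(t)) dt < ∞, then G is a translate of F: there exists c ∈ ℝ with G(x) = F(x + c) for all x ∈ ℝ. -/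
open MeasureTheory Filter Set
open scoped ENNReal

namespace SteeperAux

/-- Real-valued generalized inverse at positive real levels. -/
noncomputable def invR (H : ℝ → ℝ≥0∞) (r : ℝ) : ℝ :=
  sInf {x : ℝ | H x ≤ ENNReal.ofReal r}

variable {H : ℝ → ℝ≥0∞}

lemma levelSet_nonempty (htop : Tendsto H atTop (nhds 0)) {r : ℝ} (hr : 0 < r) :
    {x : ℝ | H x ≤ ENNReal.ofReal r}.Nonempty := by
  have h1 : ∀ᶠ x in atTop, H x < ENNReal.ofReal r :=
    htop.eventually_lt_const (ENNReal.ofReal_pos.mpr hr)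
  obtain ⟨x, hx⟩ := h1.exists
  exact ⟨x, hx.le⟩

lemma levelSet_bddBelow (hbot : Tendsto H atBot (nhds ⊤)) {r : ℝ} :
    BddBelow {x : ℝ | H x ≤ ENNReal.ofReal r} := by
  have h1 : ∀ᶠ x in atBot, ENNReal.ofReal r < H x :=
    hbot.eventually_const_lt ENNReal.ofReal_lt_top
  obtain ⟨b, hb⟩ := eventually_atBot.mp h1
  refine ⟨b, fun x hx => ?_⟩
  by_contra hlt
  exact absurd (hx.trans_lt (hb x (le_of_not_ge hlt))) (lt_irrefl _)

lemma levelSet_eq (hc : Continuous H) (ha : Antitone H)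
    (hbot : Tendsto H atBot (nhds ⊤)) (htop : Tendsto H atTop (nhds 0))
    {r : ℝ} (hr : 0 < r) :
    {x : ℝ | H x ≤ ENNReal.ofReal r} = Ici (invR H r) := by
  have hclosed : IsClosed {x : ℝ | H x ≤ ENNReal.ofReal r} :=
    isClosed_Iic.preimage hc
  have hne := levelSet_nonempty htop hr
  have hbdd := levelSet_bddBelow (H := H) hbot (r := r)
  have hmem : invR H r ∈ {x : ℝ | H x ≤ ENNReal.ofReal r} :=
    hclosed.csInf_mem hne hbdd
  apply Subset.antisymm
  · exact fun x hx => csInf_le hbdd hx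
  · exact fun x hx => le_trans (ha hx) hmem

lemma le_ofReal_iff (hc : Continuous H) (ha : Antitone H)
    (hbot : Tendsto H atBot (nhds ⊤)) (htop : Tendsto H atTop (nhds 0))
    {r : ℝ} (hr : 0 < r) {x : ℝ} :
    H x ≤ ENNReal.ofReal r ↔ invR H r ≤ x := by
  have := levelSet_eq hc ha hbot htop hr
  constructor
  · intro hx
    have : x ∈ Ici (invR H r) := this ▸ hx
    exact this
  · intro hx
    have : x ∈ {x : ℝ | H x ≤ ENNReal.ofReal r} := this ▸ (mem_Ici.mpr hx)
    exact this

lemma invR_antitone (hbot : Tendsto H atBot (nhds ⊤)) (htop : Tendsto H atTop (nhds 0))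
    {r r' : ℝ} (hr : 0 < r) (hrr : r ≤ r') :
    invR H r' ≤ invR H r := by
  refine csInf_le_csInf (levelSet_bddBelow hbot) (levelSet_nonempty htop hr) ?_
  exact fun x hx => le_trans hx (ENNReal.ofReal_le_ofReal hrr)

lemma einvT_eq (hc : Continuous H) (ha : Antitone H)
    (hbot : Tendsto H atBot (nhds ⊤)) (htop : Tendsto H atTop (nhds 0))
    {r : ℝ} (hr : 0 < r) :
    einvT H (ENNReal.ofReal r) = ((invR H r : ℝ) : EReal) := by
  rw [einvT, levelSet_eq hc ha hbot htop hr]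
  apply le_antisymm
  · exact sInf_le ⟨invR H r, self_mem_Ici, rfl⟩
  · refine le_sInf ?_
    rintro y ⟨x, hx, rfl⟩
    exact_mod_cast hx

/-- Right continuity of the generalized inverse. -/
lemma invR_rightCont (hc : Continuous H) (ha : Antitone H)
    (hbot : Tendsto H atBot (nhds ⊤)) (htop : Tendsto H atTop (nhds 0))
    {r : ℝ} (hr : 0 < r) {ε : ℝ} (hε : 0 < ε) :
    ∃ r' : ℝ, r < r' ∧ invR H r - ε ≤ invR H r' := by
  by_contra hcon
  push_neg at hcon
  have key : ∀ r' : ℝ, r < r' → H (invR H r - ε) ≤ ENNReal.ofReal r' := by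
    intro r' hr'
    have hlt : invR H r' < invR H r - ε := hcon r' hr'
    obtain ⟨x, hx, hxlt⟩ :=
      exists_lt_of_csInf_lt (levelSet_nonempty htop (hr.trans hr')) hlt
    exact le_trans (ha hxlt.le) hx
  have hle : H (invR H r - ε) ≤ ENNReal.ofReal r := by
    refine ENNReal.le_of_forall_pos_le_add fun δ hδ _ => ?_
    have h1 := key (r + (δ:ℝ)) (by
      have : (0:ℝ) < (δ:ℝ) := hδ
      linarith)
    refine h1.trans ?_
    rw [ENNReal.ofReal_add hr.le δ.coe_nonneg]
    gcongr
    simp [ENNReal.ofReal_coe_nnreal]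
  have : invR H r ≤ invR H r - ε := csInf_le (levelSet_bddBelow hbot) hle
  linarith

lemma volume_between (hc : Continuous H) (ha : Antitone H)
    (hbot : Tendsto H atBot (nhds ⊤)) (htop : Tendsto H atTop (nhds 0))
    {r r' : ℝ} (hr : 0 < r) (hrr : r ≤ r') :
    volume {t : ℝ | ENNReal.ofReal r < H t ∧ H t ≤ ENNReal.ofReal r'}
      = ENNReal.ofReal (invR H r - invR H r') := by
  have hset : {t : ℝ | ENNReal.ofReal r < H t ∧ H t ≤ ENNReal.ofReal r'}
      = Ico (invR H r') (invR H r) := by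
    ext t
    simp only [mem_setOf_eq, mem_Ico]
    rw [← le_ofReal_iff hc ha hbot htop (hr.trans_le hrr),
      ← not_le, le_ofReal_iff hc ha hbot htop hr, not_le]
    tauto
  rw [hset, Real.volume_Ico]

/-- Continuity within `Ici x` from monotonicity plus a one-sided ε–δ condition. -/
lemma cwa_of_mono (f : ℝ → ℝ) (mono : Monotone f)
    (h : ∀ x : ℝ, ∀ ε : ℝ, 0 < ε → ∃ δ : ℝ, 0 < δ ∧ f (x + δ) ≤ f x + ε) (x : ℝ) :
    ContinuousWithinAt f (Ici x) x := by
  rw [Metric.continuousWithinAt_iff]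
  intro ε hε
  obtain ⟨δ, hδ, hfδ⟩ := h x (ε / 2) (by linarith)
  refine ⟨δ, hδ, fun y hy hyd => ?_⟩
  have h1 : f x ≤ f y := mono hy
  have h2 : y ≤ x + δ := by
    rw [Real.dist_eq, abs_lt] at hyd
    linarith
  have h3 : f y ≤ f x + ε / 2 := (mono h2).trans hfδ
  rw [Real.dist_eq, abs_of_nonneg (by linarith)]
  linarith

end SteeperAux

open SteeperAux Real

section Main

variable {H : ℝ → ℝ≥0∞}

/-- The function `s ↦ -H⁻¹(exp s)` as data for a Stieltjes function. -/
noncomputable def phiAux (H : ℝ → ℝ≥0∞) : ℝ → ℝ := fun s => -(invR H (Real.exp s))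

lemma phiAux_mono (hbot : Tendsto H atBot (nhds ⊤)) (htop : Tendsto H atTop (nhds 0)) :
    Monotone (phiAux H) := by
  intro s s' hss
  have := invR_antitone (H := H) hbot htop (exp_pos s) (exp_le_exp.mpr hss)
  simp only [phiAux]
  linarith

lemma phiAux_eps (hc : Continuous H) (ha : Antitone H)
    (hbot : Tendsto H atBot (nhds ⊤)) (htop : Tendsto H atTop (nhds 0)) :
    ∀ x : ℝ, ∀ ε : ℝ, 0 < ε → ∃ δ : ℝ, 0 < δ ∧ phiAux H (x + δ) ≤ phiAux H x + ε := by
  intro x ε hε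
  obtain ⟨r', hr'gt, hr'le⟩ := invR_rightCont hc ha hbot htop (exp_pos x) hε
  have hr'pos : 0 < r' := (exp_pos x).trans hr'gt
  refine ⟨Real.log r' - x, by
    have := (Real.lt_log_iff_exp_lt hr'pos).mpr hr'gt
    linarith, ?_⟩
  have hexp : Real.exp (x + (Real.log r' - x)) = r' := by
    rw [show x + (Real.log r' - x) = Real.log r' by ring, Real.exp_log hr'pos]
  simp only [phiAux, hexp]
  linarith

/-- The Stieltjes function associated to `H`. -/
noncomputable def phiSt (hc : Continuous H) (ha : Antitone H)
    (hbot : Tendsto H atBot (nhds ⊤)) (htop : Tendsto H atTop (nhds 0)) :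
    StieltjesFunction ℝ where
  toFun := phiAux H
  mono' := phiAux_mono hbot htop
  right_continuous' := cwa_of_mono _ (phiAux_mono hbot htop) (phiAux_eps hc ha hbot htop)

/-- Pushforward identity: the `Ψ`-integral of `H` equals the integral of `s ↦ Ψ(exp s)`
against the Stieltjes measure of `phiSt`. -/
lemma pushforward (hc : Continuous H) (ha : Antitone H)
    (hbot : Tendsto H atBot (nhds ⊤)) (htop : Tendsto H atTop (nhds 0))
    (Ψ₀ : ℝ → ℝ) (hΨ₀c : Continuous Ψ₀) (hzero : Ψ₀ 0 = 0) :
    ∫⁻ t : ℝ, ENNReal.ofReal (Ψ₀ (H t).toReal)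
      = ∫⁻ s : ℝ, ENNReal.ofReal (Ψ₀ (Real.exp s)) ∂(phiSt hc ha hbot htop).measure := by
  set φ := phiSt hc ha hbot htop with hφdef
  have hφ : ∀ s, φ s = -(invR H (Real.exp s)) := fun s => rfl
  set S : Set ℝ := {t | 0 < H t ∧ H t < ⊤} with hSdef
  have hHm : Measurable H := hc.measurable
  have hS : MeasurableSet S :=
    (hHm measurableSet_Ioi).inter (hHm measurableSet_Iio)
  have hfm : Measurable fun t : ℝ => ENNReal.ofReal (Ψ₀ (H t).toReal) :=
    ENNReal.measurable_ofReal.comp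
      (hΨ₀c.measurable.comp (ENNReal.measurable_toReal.comp hHm))
  set T : ℝ → ℝ := fun t => Real.log (H t).toReal with hTdef
  have hT : Measurable T := Real.measurable_log.comp (ENNReal.measurable_toReal.comp hHm)
  -- the integral localizes to S
  have hsplit : ∫⁻ t : ℝ, ENNReal.ofReal (Ψ₀ (H t).toReal)
      = ∫⁻ t in S, ENNReal.ofReal (Ψ₀ (H t).toReal) := by
    rw [← lintegral_add_compl (fun t => ENNReal.ofReal (Ψ₀ (H t).toReal)) hS]
    have hzeroOn : ∀ t ∈ Sᶜ, ENNReal.ofReal (Ψ₀ (H t).toReal) = 0 := by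
      intro t ht
      simp only [hSdef, mem_compl_iff, mem_setOf_eq, not_and_or, not_lt] at ht
      have : (H t).toReal = 0 := by
        rcases ht with h0 | htp
        · simp [le_antisymm h0 zero_le]
        · simp [top_le_iff.mp htp]
      rw [this, hzero, ENNReal.ofReal_zero]
    have : ∫⁻ t in Sᶜ, ENNReal.ofReal (Ψ₀ (H t).toReal)
        = ∫⁻ t in Sᶜ, (0 : ℝ≥0∞) := setLIntegral_congr_fun hS.compl hzeroOn
    rw [this]
    simp
  -- identify the pushforward measure
  have hIoc : ∀ a b : ℝ, a < b → (Measure.map T (volume.restrict S)) (Ioc a b)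
      = ENNReal.ofReal (invR H (Real.exp a) - invR H (Real.exp b)) := by
    intro a b hab
    rw [Measure.map_apply hT measurableSet_Ioc,
      Measure.restrict_apply (hT measurableSet_Ioc)]
    have hseteq : T ⁻¹' (Ioc a b) ∩ S
        = {t : ℝ | ENNReal.ofReal (Real.exp a) < H t ∧ H t ≤ ENNReal.ofReal (Real.exp b)} := by
      ext t
      simp only [hTdef, hSdef, mem_inter_iff, mem_preimage, mem_Ioc, mem_setOf_eq]
      constructor
      · rintro ⟨⟨h1, h2⟩, hpos, hlt⟩
        have tpos : 0 < (H t).toReal := ENNReal.toReal_pos hpos.ne' hlt.ne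
        have e1 : Real.exp a < (H t).toReal := (Real.lt_log_iff_exp_lt tpos).mp h1
        have e2 : (H t).toReal ≤ Real.exp b := (Real.log_le_iff_le_exp tpos).mp h2
        constructor
        · exact (ENNReal.ofReal_lt_iff_lt_toReal (Real.exp_pos a).le hlt.ne).mpr e1
        · exact (ENNReal.le_ofReal_iff_toReal_le hlt.ne (Real.exp_pos b).le).mpr e2
      · rintro ⟨h1, h2⟩
        have hpos : 0 < H t := lt_of_le_of_lt zero_le h1
        have hlt : H t < ⊤ := lt_of_le_of_lt h2 ENNReal.ofReal_lt_top
        have tpos : 0 < (H t).toReal := ENNReal.toReal_pos hpos.ne' hlt.ne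
        have e1 : Real.exp a < (H t).toReal :=
          (ENNReal.ofReal_lt_iff_lt_toReal (Real.exp_pos a).le hlt.ne).mp h1
        have e2 : (H t).toReal ≤ Real.exp b :=
          (ENNReal.le_ofReal_iff_toReal_le hlt.ne (Real.exp_pos b).le).mp h2
        exact ⟨⟨(Real.lt_log_iff_exp_lt tpos).mpr e1,
          (Real.log_le_iff_le_exp tpos).mpr e2⟩, hpos, hlt⟩
    rw [hseteq, volume_between hc ha hbot htop (exp_pos a) (exp_le_exp.mpr hab.le)]
  have hmap : Measure.map T (volume.restrict S) = φ.measure := by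
    refine Measure.ext_of_Ioc' _ _ (fun a b hab => ?_) (fun a b hab => ?_)
    · rw [hIoc a b hab]; exact ENNReal.ofReal_ne_top
    · rw [hIoc a b hab, StieltjesFunction.measure_Ioc, hφ a, hφ b]
      ring_nf
  -- change of variables
  have hcongr : ∫⁻ t in S, ENNReal.ofReal (Ψ₀ (H t).toReal)
      = ∫⁻ t in S, ENNReal.ofReal (Ψ₀ (Real.exp (T t))) := by
    refine setLIntegral_congr_fun hS (fun t ht => ?_)
    have tpos : 0 < (H t).toReal := ENNReal.toReal_pos ht.1.ne' ht.2.ne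
    rw [hTdef]
    simp [Real.exp_log tpos]
  have hgm : Measurable fun s : ℝ => ENNReal.ofReal (Ψ₀ (Real.exp s)) :=
    ENNReal.measurable_ofReal.comp (hΨ₀c.measurable.comp Real.measurable_exp)
  rw [hsplit, hcongr, ← hmap, lintegral_map hgm hT]

end Main

/-- Let `F, G : ℝ → [0,∞]` be continuous nonincreasing with `F, G → ∞` at `-∞` and
`F, G → 0` at `+∞`, with `G` steeper than `F`, and let `Ψ : [0,∞) → [0,∞)` be continuous,
vanishing at `0` and at `∞`, and strictly positive on `(0,∞)`.  If
`∫_ℝ Ψ(G(t)) dt = ∫_ℝ Ψ(F(t)) dt < ∞`, then `G` is a translate of `F`. -/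
theorem steeper_layercake_strict
    (F G : ℝ → ℝ≥0∞)
    (hFc : Continuous F) (hFanti : Antitone F)
    (hFbot : Tendsto F atBot (nhds ⊤)) (hFtop : Tendsto F atTop (nhds 0))
    (hGc : Continuous G) (hGanti : Antitone G)
    (hGbot : Tendsto G atBot (nhds ⊤)) (hGtop : Tendsto G atTop (nhds 0))
    (hsteep : SteeperT F G)
    (Ψ : ℝ → ℝ)
    (hΨc : ContinuousOn Ψ (Set.Ici 0)) (hΨ_nonneg : ∀ t, 0 ≤ t → 0 ≤ Ψ t)
    (hΨ0 : Ψ 0 = 0) (hΨtop : Tendsto Ψ atTop (nhds 0))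
    (hΨpos : ∀ t : ℝ, 0 < t → 0 < Ψ t)
    (heq : (∫⁻ t : ℝ, ENNReal.ofReal (Ψ (G t).toReal))
        = ∫⁻ t : ℝ, ENNReal.ofReal (Ψ (F t).toReal))
    (hfin : (∫⁻ t : ℝ, ENNReal.ofReal (Ψ (F t).toReal)) < ⊤) :
    ∃ c : ℝ, ∀ x : ℝ, G x = F (x + c) := by
  classical
  -- a globally continuous version of Ψ
  set Ψ₀ : ℝ → ℝ := fun y => Ψ (max y 0) with hΨ₀def
  have hΨ₀c : Continuous Ψ₀ :=
    hΨc.comp_continuous (continuous_id.max continuous_const) fun y => le_max_right y 0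
  have hΨ₀eq : ∀ y : ℝ, 0 ≤ y → Ψ₀ y = Ψ y := fun y hy => by
    simp [hΨ₀def, max_eq_left hy]
  have hΨ₀zero : Ψ₀ 0 = 0 := by simp [hΨ₀def, hΨ0]
  have hGint : ∀ t : ℝ, ENNReal.ofReal (Ψ (G t).toReal) = ENNReal.ofReal (Ψ₀ (G t).toReal) :=
    fun t => by rw [hΨ₀eq _ ENNReal.toReal_nonneg]
  have hFint : ∀ t : ℝ, ENNReal.ofReal (Ψ (F t).toReal) = ENNReal.ofReal (Ψ₀ (F t).toReal) :=
    fun t => by rw [hΨ₀eq _ ENNReal.toReal_nonneg]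
  simp_rw [hGint, hFint] at heq hfin
  -- Stieltjes functions of F and G
  set φF := phiSt hFc hFanti hFbot hFtop with hφFdef
  set φG := phiSt hGc hGanti hGbot hGtop with hφGdef
  -- the difference Stieltjes function
  have hmonoH : Monotone (fun s => φF s - φG s) := by
    intro s s' hss
    have hr : (0:ℝ) < Real.exp s := exp_pos s
    have hrr : Real.exp s ≤ Real.exp s' := Real.exp_le_exp.mpr hss
    have hab : ENNReal.ofReal (Real.exp s) ≤ ENNReal.ofReal (Real.exp s') :=
      ENNReal.ofReal_le_ofReal hrr
    have hst := (hsteep _ _ hab).2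
    rw [einvT_eq hFc hFanti hFbot hFtop hr, einvT_eq hFc hFanti hFbot hFtop (exp_pos s'),
      einvT_eq hGc hGanti hGbot hGtop hr, einvT_eq hGc hGanti hGbot hGtop (exp_pos s')] at hst
    have hst' : invR G (Real.exp s) + invR F (Real.exp s')
        ≤ invR F (Real.exp s) + invR G (Real.exp s') := by exact_mod_cast hst
    show φF s - φG s ≤ φF s' - φG s'
    have e1 : φF s = -(invR F (Real.exp s)) := rfl
    have e2 : φF s' = -(invR F (Real.exp s')) := rfl
    have e3 : φG s = -(invR G (Real.exp s)) := rfl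
    have e4 : φG s' = -(invR G (Real.exp s')) := rfl
    rw [e1, e2, e3, e4]; linarith
  set φh : StieltjesFunction ℝ :=
    { toFun := fun s => φF s - φG s
      mono' := hmonoH
      right_continuous' := by
        refine cwa_of_mono _ hmonoH (fun x ε hε => ?_)
        obtain ⟨δ, hδ, hF'⟩ := phiAux_eps hFc hFanti hFbot hFtop x ε hε
        refine ⟨δ, hδ, ?_⟩
        have hG' : φG x ≤ φG (x + δ) := (phiSt hGc hGanti hGbot hGtop).mono (by linarith)
        have hF'' : φF (x + δ) ≤ φF x + ε := hF'
        show φF (x + δ) - φG (x + δ) ≤ (φF x - φG x) + ε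
        linarith } with hφhdef
  -- measure decomposition
  have hmeasdec : φF.measure = φG.measure + φh.measure := by
    refine Measure.ext_of_Ioc' _ _ (fun a b hab => ?_) (fun a b hab => ?_)
    · rw [StieltjesFunction.measure_Ioc]; exact ENNReal.ofReal_ne_top
    · rw [Measure.add_apply, StieltjesFunction.measure_Ioc, StieltjesFunction.measure_Ioc,
        StieltjesFunction.measure_Ioc]
      have h1 : φG a ≤ φG b := φG.mono hab.le
      have h2 : φh a ≤ φh b := φh.mono hab.le
      have h3 : φh a = φF a - φG a := rfl
      have h4 : φh b = φF b - φG b := rfl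
      rw [← ENNReal.ofReal_add (by linarith) (by rw [h3, h4] at h2 ⊢; linarith)]
      congr 1
      rw [h3, h4]; ring
  -- transport the integrals
  have hFpush := pushforward hFc hFanti hFbot hFtop Ψ₀ hΨ₀c hΨ₀zero
  have hGpush := pushforward hGc hGanti hGbot hGtop Ψ₀ hΨ₀c hΨ₀zero
  rw [hFpush] at hfin
  rw [hGpush, hFpush] at heq
  have hgm : Measurable fun s : ℝ => ENNReal.ofReal (Ψ₀ (Real.exp s)) :=
    ENNReal.measurable_ofReal.comp (hΨ₀c.measurable.comp Real.measurable_exp)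
  have hadd : ∫⁻ s, ENNReal.ofReal (Ψ₀ (Real.exp s)) ∂φF.measure
      = (∫⁻ s, ENNReal.ofReal (Ψ₀ (Real.exp s)) ∂φG.measure)
        + ∫⁻ s, ENNReal.ofReal (Ψ₀ (Real.exp s)) ∂φh.measure := by
    rw [hmeasdec, lintegral_add_measure]
  have hzero : ∫⁻ s, ENNReal.ofReal (Ψ₀ (Real.exp s)) ∂φh.measure = 0 := by
    have hne : (∫⁻ s, ENNReal.ofReal (Ψ₀ (Real.exp s)) ∂φG.measure) ≠ ⊤ := by
      rw [heq]; exact hfin.ne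
    have : (∫⁻ s, ENNReal.ofReal (Ψ₀ (Real.exp s)) ∂φG.measure) + 0
        = (∫⁻ s, ENNReal.ofReal (Ψ₀ (Real.exp s)) ∂φG.measure)
          + ∫⁻ s, ENNReal.ofReal (Ψ₀ (Real.exp s)) ∂φh.measure := by
      rw [add_zero, ← hadd, heq]
    exact ((ENNReal.add_right_inj hne).mp this).symm
  -- the measure of φh vanishes
  have hμh : φh.measure univ = 0 := by
    have hae := (lintegral_eq_zero_iff hgm).mp hzero
    rw [Filter.EventuallyEq, ae_iff] at hae
    refine le_antisymm (le_trans (measure_mono ?_) hae.le) zero_le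
    intro s _
    have hpos : 0 < Ψ₀ (Real.exp s) := by
      rw [hΨ₀eq _ (exp_pos s).le]
      exact hΨpos _ (exp_pos s)
    simp only [mem_setOf_eq, Pi.zero_apply]
    exact (ENNReal.ofReal_pos.mpr hpos).ne'
  -- φh is constant
  have hconst : ∀ s : ℝ, φh s = φh 0 := by
    have key : ∀ s t : ℝ, s < t → φh t = φh s := by
      intro s t hst
      have h1 : φh.measure (Ioc s t) = 0 :=
        le_antisymm ((measure_mono (subset_univ _)).trans hμh.le) zero_le
      rw [StieltjesFunction.measure_Ioc, ENNReal.ofReal_eq_zero] at h1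
      have h2 := φh.mono hst.le
      linarith
    intro s
    rcases lt_trichotomy s 0 with h | h | h
    · exact (key s 0 h).symm
    · rw [h]
    · exact key 0 s h
  -- translate identity for the inverses
  set k : ℝ := φh 0 with hkdef
  have hk : ∀ r : ℝ, 0 < r → invR G r = invR F r + k := by
    intro r hr
    have h1 : φh (Real.log r) = k := hconst (Real.log r)
    have h2 : φh (Real.log r) = φF (Real.log r) - φG (Real.log r) := rfl
    have e1 : φF (Real.log r) = -(invR F (Real.exp (Real.log r))) := rfl
    have e2 : φG (Real.log r) = -(invR G (Real.exp (Real.log r))) := rfl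
    rw [h2, e1, e2, Real.exp_log hr] at h1
    linarith
  -- conclude
  refine ⟨-k, fun x => ?_⟩
  have hxk : x + -k = x - k := by ring
  rw [hxk]
  by_contra hne
  rcases lt_or_gt_of_ne hne with hlt | hlt
  · -- G x < F (x - k)
    obtain ⟨r, hr0, h1, h2⟩ := ENNReal.lt_iff_exists_real_btwn.mp hlt
    have hrpos : 0 < r := ENNReal.ofReal_pos.mp (lt_of_le_of_lt zero_le h1)
    have hGle : G x ≤ ENNReal.ofReal r := h1.le
    have hx1 : invR G r ≤ x := (le_ofReal_iff hGc hGanti hGbot hGtop hrpos).mp hGle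
    have hx2 : invR F r ≤ x - k := by
      have := hk r hrpos
      linarith
    have : F (x - k) ≤ ENNReal.ofReal r :=
      (le_ofReal_iff hFc hFanti hFbot hFtop hrpos).mpr hx2
    exact absurd (this.trans_lt h2) (lt_irrefl _)
  · -- F (x - k) < G x
    obtain ⟨r, hr0, h1, h2⟩ := ENNReal.lt_iff_exists_real_btwn.mp hlt
    have hrpos : 0 < r := ENNReal.ofReal_pos.mp (lt_of_le_of_lt zero_le h1)
    have hFle : F (x - k) ≤ ENNReal.ofReal r := h1.le
    have hx1 : invR F r ≤ x - k := (le_ofReal_iff hFc hFanti hFbot hFtop hrpos).mp hFle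
    have hx2 : invR G r ≤ x := by
      have := hk r hrpos
      linarith
    have : G x ≤ ENNReal.ofReal r :=
      (le_ofReal_iff hGc hGanti hGbot hGtop hrpos).mpr hx2
    exact absurd (this.trans_lt h2) (lt_irrefl _)
end
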